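/- arXiv:1702.04073 — 7 statements merged into one kernel-verified Lean document; each statement's English description precedes it below -/
import Mathlib

section
/- For any u, v > 0 and λ ∈ [1/4, 1] satisfying u ≤ w/2 where w := λu + (1-λ)v, one has λ·u·log(u) + (1-λ)·v·log(v) ≥ w·log(w) + w/32. -/
/-!
With `w = λu + (1-λ)v`, the Jensen gap of `x log x` splits as
`w (λ klFun (u/w) + (1-λ) klFun (v/w))` where `klFun t = t log t + 1 - t ≥ 0`.
Since `klFun` decreases on `[0, 1]` and `u/w ≤ 1/2`, the first term is at least
`λ w klFun (1/2) = λ w (1 - log 2)/2 ≥ λ w / 8 ≥ w / 32`.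
-/

open Real InformationTheory

lemma antitoneOn_klFun : AntitoneOn klFun (Set.Icc 0 1) := by
  refine antitoneOn_of_deriv_nonpos (convex_Icc 0 1) continuous_klFun.continuousOn ?_ ?_
  · intro x hx
    rw [interior_Icc] at hx
    exact (hasDerivAt_klFun hx.1.ne').differentiableAt.differentiableWithinAt
  · intro x hx
    rw [interior_Icc] at hx
    rw [deriv_klFun]
    exact log_nonpos hx.1.le hx.2.le

lemma klFun_one_half : klFun (1 / 2) = (1 - log 2) / 2 := by
  rw [klFun_apply, one_div, log_inv]
  ring

lemma one_div_eight_le_klFun {t : ℝ} (ht₀ : 0 ≤ t) (ht : t ≤ 1 / 2) : 1 / 8 ≤ klFun t := by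
  have hhalf : klFun (1 / 2) ≤ klFun t :=
    antitoneOn_klFun ⟨ht₀, by linarith⟩ ⟨by norm_num, by norm_num⟩ ht
  have hlog2 := log_two_lt_d9
  rw [klFun_one_half] at hhalf
  linarith

lemma mul_klFun_div {w : ℝ} (hw : w ≠ 0) (x : ℝ) :
    w * klFun (x / w) = x * log x - x * log w + w - x := by
  rcases eq_or_ne x 0 with rfl | hx
  · simp [klFun_apply]
  · rw [klFun_apply, log_div hx hw]
    field_simp

lemma mul_log_jensen_gap_eq {u v lam w : ℝ} (hw : w = lam * u + (1 - lam) * v) (hw₀ : w ≠ 0) :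
    lam * (u * log u) + (1 - lam) * (v * log v) - w * log w =
      w * (lam * klFun (u / w) + (1 - lam) * klFun (v / w)) := by
  rw [mul_add, mul_left_comm w lam, mul_left_comm w (1 - lam), mul_klFun_div hw₀,
    mul_klFun_div hw₀, hw]
  ring

theorem stmt_0 (u v lam : ℝ) (hu : 0 < u) (hv : 0 < v)
    (hlam : lam ∈ Set.Icc (1/4 : ℝ) 1)
    (hw : u ≤ (lam * u + (1 - lam) * v) / 2) :
    lam * (u * Real.log u) + (1 - lam) * (v * Real.log v) ≥
      (lam * u + (1 - lam) * v) * Real.log (lam * u + (1 - lam) * v) +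
        (lam * u + (1 - lam) * v) / 32 := by
  obtain ⟨hlam₁, hlam₂⟩ := hlam
  set w := lam * u + (1 - lam) * v with hw_def
  have hw₀ : 0 < w := by linarith
  have hgap := mul_log_jensen_gap_eq hw_def hw₀.ne'
  have hu_klFun : 1 / 8 ≤ klFun (u / w) :=
    one_div_eight_le_klFun (by positivity) (by rw [div_le_iff₀ hw₀]; linarith)
  have hv_klFun : 0 ≤ klFun (v / w) := klFun_nonneg (by positivity)
  have hsum : 1 / 32 ≤ lam * klFun (u / w) + (1 - lam) * klFun (v / w) := by
    nlinarith [mul_nonneg (sub_nonneg.2 hlam₂) hv_klFun]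
  linarith [mul_le_mul_of_nonneg_left hsum hw₀.le]
end

section
/- Let V be a finite set with a probability measure μ having full support, and let A be a symmetric stochastic matrix on V reversible with respect to μ (a reversible Markov chain with stationary measure μ). For any function g : V → [0,1] there exists f : V → [0,1] such that: (1) f(x) ≤ g(x) for all x; (2) f is matching-like, i.e., for every independent set W ⊆ V (a set with ⟨1_W, A 1_W⟩ = 0, inner products with respect to μ), E[1_W · f] ≤ E[f]/2; and (3) the set {x : f(x) < g(x)} is independent. -/
open Finset

/-- The bilinear form `⟨f, A g⟩ = ∑_{x,y} μ(x) A(x,y) f(x) g(y)`. -/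
def ip {V : Type*} [Fintype V] (μ : V → ℝ) (A : V → V → ℝ) (f g : V → ℝ) : ℝ :=
  ∑ x : V, ∑ y : V, μ x * A x y * f x * g y

/-- A set `W` is independent if `⟨1_W, A 1_W⟩ = 0`. -/
def IsIndep {V : Type*} [Fintype V] [DecidableEq V]
    (μ : V → ℝ) (A : V → V → ℝ) (W : Finset V) : Prop :=
  ip μ A (fun x => if x ∈ W then 1 else 0) (fun x => if x ∈ W then 1 else 0) = 0

lemma indep_no_edge {V : Type*} [Fintype V] [DecidableEq V]
    (μ : V → ℝ) (hμpos : ∀ v, 0 < μ v)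
    (A : V → V → ℝ) (hA0 : ∀ x y, 0 ≤ A x y)
    {W : Finset V} (hW : IsIndep μ A W) {x y : V} (hx : x ∈ W) (hy : y ∈ W) :
    μ x * A x y = 0 := by
  set ind : V → ℝ := fun v => if v ∈ W then (1:ℝ) else 0 with hind
  have hindnn : ∀ v, 0 ≤ ind v := by
    intro v; simp only [hind]; split <;> norm_num
  have hterm : ∀ a b : V, 0 ≤ μ a * A a b * ind a * ind b := by
    intro a b
    have := (hμpos a).le
    have := hA0 a b
    have := hindnn a
    have := hindnn b
    positivity
  have h1 : μ x * A x y * ind x * ind y ≤ ∑ b : V, μ x * A x b * ind x * ind b :=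
    Finset.single_le_sum (fun b _ => hterm x b) (mem_univ y)
  have h2 : (∑ b : V, μ x * A x b * ind x * ind b) ≤
      ∑ a : V, ∑ b : V, μ a * A a b * ind a * ind b :=
    Finset.single_le_sum (fun a _ => Finset.sum_nonneg fun b _ => hterm a b) (mem_univ x)
  have hW0 : (∑ a : V, ∑ b : V, μ a * A a b * ind a * ind b) = 0 := hW
  have hle : μ x * A x y * ind x * ind y ≤ 0 := by
    have := h1.trans h2
    rwa [hW0] at this
  have hindx : ind x = 1 := by simp [hind, hx]
  have hindy : ind y = 1 := by simp [hind, hy]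
  rw [hindx, hindy, mul_one, mul_one] at hle
  exact le_antisymm hle (mul_nonneg (hμpos x).le (hA0 x y))

theorem stmt_2 {V : Type*} [Fintype V] [DecidableEq V]
    (μ : V → ℝ) (hμpos : ∀ v, 0 < μ v) (hμ1 : ∑ v : V, μ v = 1)
    (A : V → V → ℝ) (hA0 : ∀ x y, 0 ≤ A x y) (hAstoch : ∀ x, ∑ y : V, A x y = 1)
    (hrev : ∀ x y, μ x * A x y = μ y * A y x)
    (g : V → ℝ) (hg : ∀ x, g x ∈ Set.Icc (0:ℝ) 1) :
    ∃ f : V → ℝ, (∀ x, f x ∈ Set.Icc (0:ℝ) 1) ∧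
      (∀ x, f x ≤ g x) ∧
      (∀ W : Finset V, IsIndep μ A W →
        ∑ x ∈ W, μ x * f x ≤ (∑ x : V, μ x * f x) / 2) ∧
      IsIndep μ A (Finset.univ.filter (fun x => f x < g x)) := by
  classical
  -- the feasible set
  set K : Set (V → ℝ) :=
    {f | (∀ v, f v ∈ Set.Icc 0 (g v)) ∧
      ∀ W : Finset V, IsIndep μ A W →
        ∑ x ∈ W, μ x * f x ≤ (∑ x : V, μ x * f x) / 2} with hK
  have hK0 : (fun _ => (0:ℝ)) ∈ K := by
    constructor
    · intro v; exact ⟨le_refl 0, (hg v).1⟩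
    · intro W _; simp
  -- continuity of weighted sums
  have hcont : ∀ s : Finset V, Continuous (fun f : V → ℝ => ∑ x ∈ s, μ x * f x) := by
    intro s
    exact continuous_finset_sum s fun x _ => (continuous_const.mul (continuous_apply x))
  -- K is compact
  have hKsub : K ⊆ Set.pi Set.univ (fun v => Set.Icc (0:ℝ) (g v)) := by
    intro f hf v _
    exact hf.1 v
  have hKclosed : IsClosed K := by
    have h1 : IsClosed {f : V → ℝ | ∀ v, f v ∈ Set.Icc 0 (g v)} := by
      have : {f : V → ℝ | ∀ v, f v ∈ Set.Icc 0 (g v)} =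
          ⋂ v, {f : V → ℝ | f v ∈ Set.Icc 0 (g v)} := by
        ext f; simp
      rw [this]
      exact isClosed_iInter fun v =>
        (isClosed_Icc).preimage (continuous_apply v)
    have h2 : IsClosed {f : V → ℝ | ∀ W : Finset V, IsIndep μ A W →
        ∑ x ∈ W, μ x * f x ≤ (∑ x : V, μ x * f x) / 2} := by
      have : {f : V → ℝ | ∀ W : Finset V, IsIndep μ A W →
          ∑ x ∈ W, μ x * f x ≤ (∑ x : V, μ x * f x) / 2} =
          ⋂ W : Finset V, ⋂ _ : IsIndep μ A W,
            {f : V → ℝ | ∑ x ∈ W, μ x * f x ≤ (∑ x : V, μ x * f x) / 2} := by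
        ext f; simp
      rw [this]
      exact isClosed_iInter fun W => isClosed_iInter fun _ =>
        isClosed_le (hcont W) (Continuous.div_const (hcont univ) 2)
    exact h1.inter h2
  have hKcompact : IsCompact K := by
    have : IsCompact (Set.pi Set.univ (fun v => Set.Icc (0:ℝ) (g v))) :=
      isCompact_univ_pi fun v => isCompact_Icc
    exact this.of_isClosed_subset hKclosed hKsub
  -- maximize the total mass over K
  obtain ⟨f, hfK, hfmax⟩ := hKcompact.exists_isMaxOn ⟨_, hK0⟩ ((hcont univ).continuousOn)
  obtain ⟨hfIcc, hfmatch⟩ := hfK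
  refine ⟨f, ?_, fun x => (hfIcc x).2, hfmatch, ?_⟩
  · intro x
    exact ⟨(hfIcc x).1, le_trans (hfIcc x).2 (hg x).2⟩
  -- the deficiency set is independent
  by_contra hnind
  set S : Finset V := univ.filter (fun x => f x < g x) with hS
  -- find an edge inside S
  have : ∃ x y : V, x ∈ S ∧ y ∈ S ∧ 0 < μ x * A x y := by
    by_contra h
    push_neg at h
    apply hnind
    unfold IsIndep ip
    apply Finset.sum_eq_zero
    intro x _
    apply Finset.sum_eq_zero
    intro y _
    by_cases hx : x ∈ S
    · by_cases hy : y ∈ S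
      · have h1 : μ x * A x y ≤ 0 := h x y hx hy
        have h2 : 0 ≤ μ x * A x y := mul_nonneg (hμpos x).le (hA0 x y)
        have : μ x * A x y = 0 := le_antisymm h1 h2
        simp [this]
      · simp [hy]
    · simp [hx]
  obtain ⟨x, y, hxS, hyS, hedge⟩ := this
  have hfx : f x < g x := by simpa [hS] using hxS
  have hfy : f y < g y := by simpa [hS] using hyS
  -- perturbation
  set ε : ℝ := min (μ x * (g x - f x) / 2) (μ y * (g y - f y) / 2) with hε
  have hεpos : 0 < ε := by
    apply lt_min
    · have := hμpos x; nlinarith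
    · have := hμpos y; nlinarith
  set f' : V → ℝ := fun v =>
    f v + (if v = x then ε / μ x else 0) + (if v = y then ε / μ y else 0) with hf'
  -- key weighted sum computation
  have hsum : ∀ s : Finset V, ∑ v ∈ s, μ v * f' v =
      (∑ v ∈ s, μ v * f v) + (if x ∈ s then ε else 0) + (if y ∈ s then ε else 0) := by
    intro s
    have hμcx : ∀ v, μ v * (if v = x then ε / μ x else 0) = if v = x then ε else 0 := by
      intro v; by_cases h : v = x
      · subst h; rw [if_pos rfl, if_pos rfl]
        rw [mul_div_assoc', mul_div_cancel_left₀ _ (hμpos _).ne']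
      · rw [if_neg h, if_neg h, mul_zero]
    have hμcy : ∀ v, μ v * (if v = y then ε / μ y else 0) = if v = y then ε else 0 := by
      intro v; by_cases h : v = y
      · subst h; rw [if_pos rfl, if_pos rfl]
        rw [mul_div_assoc', mul_div_cancel_left₀ _ (hμpos _).ne']
      · rw [if_neg h, if_neg h, mul_zero]
    have : ∀ v, μ v * f' v = μ v * f v + (if v = x then ε else 0) + (if v = y then ε else 0) := by
      intro v
      simp only [hf', mul_add, hμcx v, hμcy v]
    simp only [this, Finset.sum_add_distrib, Finset.sum_ite_eq' s]
  -- f' ∈ K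
  have hf'K : f' ∈ K := by
    constructor
    · intro v
      constructor
      · have : (0:ℝ) ≤ if v = x then ε / μ x else 0 := by
          split
          · exact div_nonneg hεpos.le (hμpos x).le
          · exact le_rfl
        have h2 : (0:ℝ) ≤ if v = y then ε / μ y else 0 := by
          split
          · exact div_nonneg hεpos.le (hμpos y).le
          · exact le_rfl
        have := (hfIcc v).1
        simp only [hf']
        linarith
      · have hex : ε / μ x ≤ (g x - f x) / 2 := by
          rw [div_le_div_iff₀ (hμpos x) two_pos]
          have h1 : ε ≤ μ x * (g x - f x) / 2 := min_le_left _ _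
          nlinarith [hμpos x]
        have hey : ε / μ y ≤ (g y - f y) / 2 := by
          rw [div_le_div_iff₀ (hμpos y) two_pos]
          have h1 : ε ≤ μ y * (g y - f y) / 2 := min_le_right _ _
          nlinarith [hμpos y]
        simp only [hf']
        by_cases h1 : v = x <;> by_cases h2 : v = y
        · subst_vars; simp; linarith
        · subst h1; simp [h2]; linarith
        · subst h2; simp [h1]; linarith
        · simp [h1, h2]; exact (hfIcc v).2
    · intro W hW
      -- not both x and y in W
      have hnotboth : ¬ (x ∈ W ∧ y ∈ W) := by
        rintro ⟨hxW, hyW⟩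
        have := indep_no_edge μ hμpos A hA0 hW hxW hyW
        linarith
      have hWle : (if x ∈ W then ε else 0) + (if y ∈ W then ε else 0) ≤ ε := by
        by_cases h1 : x ∈ W <;> by_cases h2 : y ∈ W
        · exact absurd ⟨h1, h2⟩ hnotboth
        · simp [h1, h2]
        · simp [h1, h2]
        · simp [h1, h2]; linarith
      rw [hsum W, hsum univ]
      simp only [mem_univ, if_true]
      have := hfmatch W hW
      linarith
  -- contradiction with maximality
  have hlt : (∑ v : V, μ v * f v) < ∑ v : V, μ v * f' v := by
    rw [hsum univ]
    simp only [mem_univ, if_true]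
    linarith
  have := hfmax hf'K
  simp only [Set.mem_setOf_eq] at this
  exact absurd (lt_of_lt_of_le hlt this) (lt_irrefl _)
end

section
/- Fix 0 < p < 1/2 and integers n, k with k = pn. For f : binom([n], k) → [0,1], define g : powerset([n]) → [0,1] by g(x) = (binom(|x|,k))^{-1} · Σ_{x' ⊆ x, |x'|=k} f(x') if |x| ≥ k and g(x) = 0 otherwise. Define Edge(f) = Σ_{x,y ∈ binom([n],k), x ∩ y = ∅} f(x)f(y) / (binom(n,k)·binom(n-k,k)) and Edge(g) = Σ_{x,y ⊆ [n], x ∩ y = ∅} g(x)g(y)·μ_{p,p}(x,y), where μ_{p,p}(x,y) = p^{|x|}·p^{|y|}·(1-2p)^{n-|x|-|y|}. Then Edge(g) ≤ Edge(f). -/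
open Finset

/-- The "up" extrapolation of `f` (defined on `k`-subsets) to all subsets:
`g(x) = binom(|x|,k)⁻¹ ∑_{x' ⊆ x, |x'| = k} f(x')` for `|x| ≥ k`, else `0`. -/
noncomputable def upFn {n : ℕ} (k : ℕ) (f : Finset (Fin n) → ℝ)
    (x : Finset (Fin n)) : ℝ :=
  if k ≤ x.card then (x.card.choose k : ℝ)⁻¹ * ∑ x' ∈ x.powersetCard k, f x'
  else 0

/-- `Edge(f)` for `f` on the Kneser graph `K(n,k)`. -/
noncomputable def edgeF (n k : ℕ) (f : Finset (Fin n) → ℝ) : ℝ :=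
  ∑ x ∈ (Finset.univ : Finset (Fin n)).powersetCard k,
    ∑ y ∈ (Finset.univ : Finset (Fin n)).powersetCard k,
      if Disjoint x y then f x * f y / ((n.choose k : ℝ) * ((n - k).choose k : ℝ))
      else 0

/-- `Edge(g)` for `g` on the cube, w.r.t. the measure `μ_{p,p}`. -/
noncomputable def edgeG (n : ℕ) (p : ℝ) (g : Finset (Fin n) → ℝ) : ℝ :=
  ∑ x : Finset (Fin n), ∑ y : Finset (Fin n),
    if Disjoint x y then
      g x * g y * (p ^ x.card * p ^ y.card * (1 - 2 * p) ^ (n - x.card - y.card))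
    else 0

/-!
Expanding `upFn k f = ∑ᵤ f u • upBasis k u` turns `Edge(g)` into the quadratic form
`∑ f u * f v * W(u, v)` over pairs of `k`-sets, with `W = upWeight` vanishing unless `u, v` are
disjoint. Permutations of `Fin n` preserve `μ_{p,p}` and act transitively on disjoint pairs of
`k`-sets, so `W` is a constant `c` on them. Since `∑ᵤ upBasis k u ≤ 1` pointwise, the total weight
`C(n,k) C(n-k,k) c` is at most the total mass of `μ_{p,p}`, which is `1`; so `c` is at most the
weight `1 / (C(n,k) C(n-k,k))` that `Edge(f)` gives to each edge.
-/

section Combinatorics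

variable {α : Type*} [Fintype α]

theorem Equiv.Perm.exists_comp_eq_of_card_fiber_eq {β : Type*} [DecidableEq β] {f g : α → β}
    (h : ∀ b, #{a | f a = b} = #{a | g a = b}) : ∃ σ : Equiv.Perm α, g ∘ σ = f :=
  ⟨Equiv.ofFiberEquiv fun b => Fintype.equivOfCardEq (by simpa [Fintype.card_subtype] using h b),
    funext (Equiv.ofFiberEquiv_map _)⟩

variable [DecidableEq α]

theorem card_filter_decide_mem_eq {s t : Finset α} (h : Disjoint s t) (b c : Bool) :
    #{a | (decide (a ∈ s), decide (a ∈ t)) = (b, c)} =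
      if b then (if c then 0 else #s) else if c then #t else Fintype.card α - (#s + #t) := by
  rcases b with _ | _ <;> rcases c with _ | _ <;>
    simp only [Prod.mk.injEq, decide_eq_true_iff, decide_eq_false_iff_not, Bool.false_eq_true,
      if_true, if_false]
  · rw [← card_union_of_disjoint h, ← card_compl]
    congr 1; ext; simp
  · congr 1; ext a; simpa using fun ha => disjoint_right.1 h ha
  · congr 1; ext a; simpa using fun ha => disjoint_left.1 h ha
  · simpa using fun a ha => disjoint_left.1 h ha

theorem exists_perm_map_eq_of_disjoint {s t s' t' : Finset α} (h : Disjoint s t)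
    (h' : Disjoint s' t') (hs : #s = #s') (ht : #t = #t') :
    ∃ σ : Equiv.Perm α, s.map σ.toEmbedding = s' ∧ t.map σ.toEmbedding = t' := by
  obtain ⟨σ, hσ⟩ := Equiv.Perm.exists_comp_eq_of_card_fiber_eq
    (f := fun a => (decide (a ∈ s), decide (a ∈ t)))
    (g := fun a => (decide (a ∈ s'), decide (a ∈ t'))) fun ⟨b, c⟩ => by
      rw [card_filter_decide_mem_eq h, card_filter_decide_mem_eq h', hs, ht]
  have hmem : ∀ a, (σ a ∈ s' ↔ a ∈ s) ∧ (σ a ∈ t' ↔ a ∈ t) := fun a => by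
    simpa using congrFun hσ a
  refine ⟨σ, ?_, ?_⟩ <;> ext b <;> obtain ⟨a, rfl⟩ := σ.surjective b <;> simp [hmem]

theorem filter_subset_powersetCard_univ (k : ℕ) (x : Finset α) :
    ({u ∈ univ.powersetCard k | u ⊆ x} : Finset (Finset α)) = x.powersetCard k := by
  ext u; simp [mem_powersetCard, and_comm]

theorem sum_card_filter_disjoint_powersetCard (k : ℕ) :
    ∑ u ∈ (univ : Finset α).powersetCard k, #{v ∈ univ.powersetCard k | Disjoint u v} =
      (Fintype.card α).choose k * (Fintype.card α - k).choose k := by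
  have hrow (u) (hu : u ∈ (univ : Finset α).powersetCard k) :
      #{v ∈ univ.powersetCard k | Disjoint u v} = (Fintype.card α - k).choose k := by
    have : ({v ∈ univ.powersetCard k | Disjoint u v} : Finset (Finset α)) =
        uᶜ.powersetCard k := by
      ext v; simp [subset_compl_iff_disjoint_left, and_comm]
    rw [this, card_powersetCard, card_compl, (mem_powersetCard_univ.1 hu)]
  rw [sum_congr rfl hrow, sum_const, card_powersetCard, card_univ, smul_eq_mul]

end Combinatorics

open Matrix

theorem Matrix.dotProduct_mulVec_comp_equiv {m R : Type*} [Fintype m] [CommSemiring R]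
    {M : Matrix m m R} (e : m ≃ m) (hM : M.submatrix e e = M) (g h : m → R) :
    g ∘ e ⬝ᵥ M *ᵥ (h ∘ e) = g ⬝ᵥ M *ᵥ h := by
  conv_lhs => rw [← hM, submatrix_mulVec_equiv, Function.comp_assoc, e.self_comp_symm,
    Function.comp_id, comp_equiv_dotProduct_comp_equiv]

theorem Matrix.dotProduct_mulVec_le_dotProduct_mulVec {m R : Type*} [Fintype m] [CommSemiring R]
    [PartialOrder R] [IsOrderedRing R] {M : Matrix m m R} (hM : ∀ i j, 0 ≤ M i j)
    {g g' h h' : m → R} (hg : 0 ≤ g) (hgg' : g ≤ g') (hh : 0 ≤ h) (hhh' : h ≤ h') :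
    g ⬝ᵥ M *ᵥ h ≤ g' ⬝ᵥ M *ᵥ h' :=
  calc g ⬝ᵥ M *ᵥ h
      ≤ g' ⬝ᵥ M *ᵥ h :=
        dotProduct_le_dotProduct_of_nonneg_right hgg' fun i =>
          dotProduct_nonneg_of_nonneg (fun j => hM i j) hh
    _ ≤ g' ⬝ᵥ M *ᵥ h' :=
        dotProduct_le_dotProduct_of_nonneg_left
          (fun i => dotProduct_le_dotProduct_of_nonneg_left hhh' fun j => hM i j) (hg.trans hgg')

section MuPP

variable {n : ℕ} {p : ℝ}

/-- The density of `μ_{p,p}`, as a matrix so that `Edge(g) = g ⬝ᵥ muPP n p *ᵥ g`. -/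
noncomputable def muPP (n : ℕ) (p : ℝ) : Matrix (Finset (Fin n)) (Finset (Fin n)) ℝ :=
  of fun x y => if Disjoint x y then p ^ #x * p ^ #y * (1 - 2 * p) ^ (n - #x - #y) else 0

theorem edgeG_eq_dotProduct_mulVec (g : Finset (Fin n) → ℝ) :
    edgeG n p g = g ⬝ᵥ muPP n p *ᵥ g := by
  simp only [edgeG, dotProduct, mulVec, muPP, of_apply, mul_sum]
  refine sum_congr rfl fun x _ => sum_congr rfl fun y _ => ?_
  split_ifs <;> ring

theorem muPP_nonneg (hp : 0 ≤ p) (hp' : p ≤ 1 / 2) (x y : Finset (Fin n)) :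
    0 ≤ muPP n p x y := by
  have : 0 ≤ 1 - 2 * p := by linarith
  simp only [muPP, of_apply]
  split_ifs <;> positivity

theorem sum_muPP : ∑ x, ∑ y, muPP n p x y = 1 := by
  have hrow (x : Finset (Fin n)) : ∑ y, muPP n p x y = p ^ #x * (1 - p) ^ (n - #x) := by
    have hdisj : ({y | Disjoint x y} : Finset _) = xᶜ.powerset := by
      ext y; simp [subset_compl_iff_disjoint_left]
    have hcompl : #xᶜ = n - #x := by rw [card_compl, Fintype.card_fin]
    simp only [muPP, of_apply]
    rw [← sum_filter, hdisj, ← hcompl, show 1 - p = p + (1 - 2 * p) by ring,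
      ← sum_pow_mul_eq_add_pow, mul_sum]
    exact sum_congr rfl fun y _ => mul_assoc _ _ _
  simp only [hrow]
  simpa using Fintype.sum_pow_mul_eq_add_pow (Fin n) p (1 - p)

theorem muPP_submatrix_finsetCongr (σ : Equiv.Perm (Fin n)) :
    (muPP n p).submatrix σ.finsetCongr σ.finsetCongr = muPP n p := by
  ext x y
  simp [muPP, Equiv.finsetCongr_apply]

end MuPP

section Up

variable {n k : ℕ} {p : ℝ}

/-- `upFn k` of the indicator of `{u}`, for `#u = k`. -/
noncomputable def upBasis (k : ℕ) (u x : Finset (Fin n)) : ℝ :=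
  if u ⊆ x then ((#x).choose k : ℝ)⁻¹ else 0

theorem upFn_eq_sum_smul_upBasis (f : Finset (Fin n) → ℝ) :
    upFn k f = ∑ u ∈ univ.powersetCard k, f u • upBasis k u := by
  ext x
  simp only [upFn, Finset.sum_apply, Pi.smul_apply, smul_eq_mul, upBasis, mul_ite, mul_zero]
  rw [← sum_filter, filter_subset_powersetCard_univ, ← sum_mul, mul_comm]
  split_ifs with h
  · rfl
  · simp [Nat.choose_eq_zero_of_lt (not_le.1 h)]

theorem upBasis_nonneg (u x : Finset (Fin n)) : 0 ≤ upBasis k u x := by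
  unfold upBasis; split_ifs <;> positivity

theorem sum_upBasis_le_one (x : Finset (Fin n)) :
    ∑ u ∈ univ.powersetCard k, upBasis k u x ≤ 1 := by
  simp only [upBasis]
  rw [← sum_filter, filter_subset_powersetCard_univ, sum_const, card_powersetCard, nsmul_eq_mul]
  exact mul_inv_le_one

theorem upBasis_finsetCongr (σ : Equiv.Perm (Fin n)) (u x : Finset (Fin n)) :
    upBasis k (σ.finsetCongr u) (σ.finsetCongr x) = upBasis k u x := by
  simp [upBasis, Equiv.finsetCongr_apply]

noncomputable def upWeight (n k : ℕ) (p : ℝ) (u v : Finset (Fin n)) : ℝ :=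
  upBasis k u ⬝ᵥ muPP n p *ᵥ upBasis k v

theorem edgeG_upFn (f : Finset (Fin n) → ℝ) :
    edgeG n p (upFn k f) =
      ∑ u ∈ univ.powersetCard k, ∑ v ∈ univ.powersetCard k, f u * f v * upWeight n k p u v := by
  simp only [edgeG_eq_dotProduct_mulVec, upFn_eq_sum_smul_upBasis, mulVec_sum, mulVec_smul,
    sum_dotProduct, dotProduct_sum, smul_dotProduct, dotProduct_smul, smul_eq_mul, upWeight,
    mul_sum]
  rw [sum_comm]
  refine sum_congr rfl fun u _ => sum_congr rfl fun v _ => ?_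
  ring

theorem upWeight_nonneg (hp : 0 ≤ p) (hp' : p ≤ 1 / 2) (u v : Finset (Fin n)) :
    0 ≤ upWeight n k p u v :=
  dotProduct_nonneg_of_nonneg (upBasis_nonneg u) fun x =>
    dotProduct_nonneg_of_nonneg (muPP_nonneg hp hp' x) (upBasis_nonneg v)

theorem upWeight_eq_zero_of_not_disjoint {u v : Finset (Fin n)} (h : ¬Disjoint u v) :
    upWeight n k p u v = 0 := by
  simp only [upWeight, mulVec, dotProduct]
  refine sum_eq_zero fun x _ => ?_
  by_cases hux : u ⊆ x
  · refine mul_eq_zero_of_right _ (sum_eq_zero fun y _ => ?_)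
    by_cases hvy : v ⊆ y
    · have : ¬Disjoint x y := fun hxy => h (hxy.mono hux hvy)
      simp [muPP, this]
    · simp [upBasis, hvy]
  · simp [upBasis, hux]

theorem upWeight_finsetCongr (σ : Equiv.Perm (Fin n)) (u v : Finset (Fin n)) :
    upWeight n k p (σ.finsetCongr u) (σ.finsetCongr v) = upWeight n k p u v := by
  have hcomp (w : Finset (Fin n)) : upBasis k (σ.finsetCongr w) ∘ σ.finsetCongr = upBasis k w :=
    funext (upBasis_finsetCongr σ w)
  rw [upWeight, upWeight, ← dotProduct_mulVec_comp_equiv σ.finsetCongr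
    (muPP_submatrix_finsetCongr σ), hcomp, hcomp]

theorem upWeight_eq_of_disjoint {u v u' v' : Finset (Fin n)} (h : Disjoint u v)
    (h' : Disjoint u' v') (hu : #u = #u') (hv : #v = #v') :
    upWeight n k p u v = upWeight n k p u' v' := by
  obtain ⟨σ, rfl, rfl⟩ := exists_perm_map_eq_of_disjoint h h' hu hv
  exact (upWeight_finsetCongr σ u v).symm

theorem sum_upWeight_le_one (hp : 0 ≤ p) (hp' : p ≤ 1 / 2) :
    ∑ u ∈ univ.powersetCard k, ∑ v ∈ univ.powersetCard k, upWeight n k p u v ≤ 1 :=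
  calc ∑ u ∈ univ.powersetCard k, ∑ v ∈ univ.powersetCard k, upWeight n k p u v
      = (∑ u ∈ univ.powersetCard k, upBasis k u) ⬝ᵥ
          muPP n p *ᵥ ∑ v ∈ univ.powersetCard k, upBasis k v := by
        simp only [upWeight, mulVec_sum, sum_dotProduct, dotProduct_sum]
        exact sum_comm
    _ ≤ 1 ⬝ᵥ muPP n p *ᵥ 1 := by
        have h0 : 0 ≤ ∑ u ∈ univ.powersetCard k, upBasis (n := n) k u :=
          sum_nonneg fun u _ => upBasis_nonneg u
        have h1 : ∑ u ∈ univ.powersetCard k, upBasis (n := n) k u ≤ 1 := fun x => by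
          simpa only [Finset.sum_apply, Pi.one_apply] using sum_upBasis_le_one x
        exact dotProduct_mulVec_le_dotProduct_mulVec (muPP_nonneg hp hp') h0 h1 h0 h1
    _ = 1 := by simp [mulVec, dotProduct, sum_muPP]

theorem upWeight_le_inv {u v : Finset (Fin n)} (h : Disjoint u v) (hu : #u = k) (hv : #v = k)
    (hp : 0 ≤ p) (hp' : p ≤ 1 / 2) :
    upWeight n k p u v ≤ ((n.choose k : ℝ) * ((n - k).choose k : ℝ))⁻¹ := by
  have hkn : k + k ≤ n := by
    simpa [card_union_of_disjoint h, hu, hv] using card_le_univ (u ∪ v)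
  have hN : 0 < (n.choose k : ℝ) * ((n - k).choose k : ℝ) := by
    have := Nat.choose_pos (n := n) (k := k) (by omega)
    have := Nat.choose_pos (n := n - k) (k := k) (by omega)
    positivity
  have hcount := sum_card_filter_disjoint_powersetCard (α := Fin n) k
  rw [Fintype.card_fin] at hcount
  rw [← mul_one _⁻¹, le_inv_mul_iff₀ hN]
  calc ((n.choose k : ℝ) * ((n - k).choose k : ℝ)) * upWeight n k p u v
      = ∑ u' ∈ univ.powersetCard k, ∑ v' ∈ univ.powersetCard k with Disjoint u' v',
          upWeight n k p u' v' := by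
        rw [← Nat.cast_mul, ← hcount, Nat.cast_sum, sum_mul]
        refine sum_congr rfl fun u' hu' => ?_
        rw [sum_congr rfl fun v' hv' => ?_, sum_const, nsmul_eq_mul]
        rw [mem_filter, mem_powersetCard_univ] at hv'
        exact upWeight_eq_of_disjoint hv'.2 h (by rw [mem_powersetCard_univ.1 hu', hu])
          (by rw [hv'.1, hv])
    _ ≤ ∑ u' ∈ univ.powersetCard k, ∑ v' ∈ univ.powersetCard k, upWeight n k p u' v' :=
        sum_le_sum fun u' _ => sum_le_sum_of_subset_of_nonneg (filter_subset _ _)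
          fun _ _ _ => upWeight_nonneg hp hp' _ _
    _ ≤ 1 := sum_upWeight_le_one hp hp'

end Up

theorem stmt_7_general (p : ℝ) (hp0 : 0 < p) (hp : p < 1 / 2)
    (n k : ℕ)
    (f : Finset (Fin n) → ℝ)
    (hf : ∀ s : Finset (Fin n), s.card = k → f s ∈ Set.Icc (0:ℝ) 1) :
    edgeG n p (upFn k f) ≤ edgeF n k f := by
  rw [edgeG_upFn, edgeF]
  refine sum_le_sum fun u hu => sum_le_sum fun v hv => ?_
  rw [mem_powersetCard_univ] at hu hv
  split_ifs with h
  · rw [div_eq_mul_inv]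
    exact mul_le_mul_of_nonneg_left (upWeight_le_inv h hu hv hp0.le hp.le)
      (mul_nonneg (hf u hu).1 (hf v hv).1)
  · rw [upWeight_eq_zero_of_not_disjoint h, mul_zero]

theorem stmt_7 (p : ℝ) (hp0 : 0 < p) (hp : p < 1 / 2)
    (n k : ℕ) (hn : 0 < n) (hk : 0 < k) (hkp : (k : ℝ) = p * n)
    (f : Finset (Fin n) → ℝ)
    (hf : ∀ s : Finset (Fin n), s.card = k → f s ∈ Set.Icc (0:ℝ) 1) :
    edgeG n p (upFn k f) ≤ edgeF n k f :=
  stmt_7_general p hp0 hp n k f hf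
end

section
/- Let 0 < λ < 1. For any η ∈ (0,1) with η > 1 − λ and (1−η)·log_λ(1−η) ≤ √(1−η), the quantity max_{k ≥ 0} (1 − η^{2k})·λ^k is at most √(1−η). -/
theorem stmt_10 (lambda η : ℝ) (hl0 : 0 < lambda) (hl1 : lambda < 1)
    (hη : η ∈ Set.Ioo (0:ℝ) 1) (hηl : 1 - lambda < η)
    (hcond : (1 - η) * Real.logb lambda (1 - η) ≤ Real.sqrt (1 - η)) :
    ∀ k : ℕ, (1 - η ^ (2 * k)) * lambda ^ k ≤ Real.sqrt (1 - η) := by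
  obtain ⟨hη0, hη1⟩ := hη
  intro k
  have hε0 : 0 < 1 - η := by linarith
  have hε1 : 1 - η < 1 := by linarith
  have hlk0 : 0 < lambda ^ k := pow_pos hl0 k
  have hlk1 : lambda ^ k ≤ 1 := pow_le_one₀ hl0.le hl1.le
  have hbern : 1 - η ^ (2 * k) ≤ 2 * k * (1 - η) := by
    have h := one_add_mul_le_pow (a := η - 1) (by linarith) (2 * k)
    have h2 : (1:ℝ) + (2 * k : ℕ) * (η - 1) ≤ η ^ (2 * k) := by
      simpa using h
    push_cast at h2
    nlinarith
  have hsq0 : 0 < Real.sqrt (1 - η) := Real.sqrt_pos.mpr hε0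
  by_cases hc : lambda ^ k ≤ Real.sqrt (1 - η)
  · have h1 : 1 - η ^ (2 * k) ≤ 1 := by
      have : 0 ≤ η ^ (2 * k) := pow_nonneg hη0.le _
      linarith
    calc (1 - η ^ (2 * k)) * lambda ^ k ≤ 1 * lambda ^ k :=
          mul_le_mul_of_nonneg_right h1 hlk0.le
      _ ≤ Real.sqrt (1 - η) := by simpa using hc
  · push_neg at hc
    have hlnl : Real.log lambda < 0 := Real.log_neg hl0 hl1
    have hlog : Real.log (Real.sqrt (1 - η)) < (k : ℝ) * Real.log lambda := by
      have := Real.log_lt_log hsq0 hc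
      simpa [Real.log_pow] using this
    have hsqlog : Real.log (Real.sqrt (1 - η)) = Real.log (1 - η) / 2 :=
      Real.log_sqrt hε0.le
    have hK : 2 * (k : ℝ) ≤ Real.logb lambda (1 - η) := by
      rw [Real.logb]
      rw [le_div_iff_of_neg hlnl]
      rw [hsqlog] at hlog
      linarith
    have hfin : 2 * (k : ℝ) * (1 - η) ≤ Real.sqrt (1 - η) := by
      have : 2 * (k : ℝ) * (1 - η) ≤ Real.logb lambda (1 - η) * (1 - η) :=
        mul_le_mul_of_nonneg_right hK hε0.le
      nlinarith [hcond]
    calc (1 - η ^ (2 * k)) * lambda ^ k ≤ 2 * k * (1 - η) * lambda ^ k :=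
          mul_le_mul_of_nonneg_right hbern hlk0.le
      _ ≤ 2 * k * (1 - η) * 1 := by
          have hk0 : (0:ℝ) ≤ 2 * k * (1 - η) := by positivity
          exact mul_le_mul_of_nonneg_left hlk1 hk0
      _ ≤ Real.sqrt (1 - η) := by simpa using hfin
end

section
/- Let V be a finite set with probability measure μ, and let N_η be the noise operator with parameter η ∈ [0,1] on L^2(V^n, μ^{⊗n}) (acting diagonally in an orthonormal eigenbasis of a reversible chain, multiplying degree-|S| components by η^{|S|}; equivalently, N_η f(x) = E[f(y)] where each coordinate y_i equals x_i with probability η and is resampled from μ with probability 1−η, independently). Then for any ε > 0 and f : V^n → [0,1], E_x[1_{N_η f(x) ≤ ε} · f(x)] ≤ ε. -/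
open Finset


section aux
variable {V : Type*} [Fintype V] [DecidableEq V] (μ : V → ℝ)

/-- one-coordinate noise kernel -/
noncomputable def kk (c : ℝ) (a b : V) : ℝ := (if b = a then c else 0) + (1 - c) * μ b

lemma kk_nonneg (hμ0 : ∀ v, 0 ≤ μ v) {c : ℝ} (hc0 : 0 ≤ c) (hc1 : c ≤ 1) (a b : V) :
    0 ≤ kk μ c a b := by
  unfold kk
  have := hμ0 b
  split <;> nlinarith

lemma kk_rowsum (hμ1 : ∑ v : V, μ v = 1) (c : ℝ) (a : V) : ∑ b : V, kk μ c a b = 1 := by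
  unfold kk
  rw [Finset.sum_add_distrib, Finset.sum_ite_eq' Finset.univ a (fun _ => c), ← Finset.mul_sum,
    hμ1]
  simp

lemma kk_symm (c : ℝ) (a b : V) : μ a * kk μ c a b = μ b * kk μ c b a := by
  unfold kk
  by_cases h : b = a
  · subst h; ring
  · rw [if_neg h, if_neg (fun h' => h h'.symm)]; ring

lemma kk_comp (hμ1 : ∑ v : V, μ v = 1) (c : ℝ) (a b : V) :
    ∑ v : V, kk μ c a v * kk μ c v b = kk μ (c * c) a b := by
  unfold kk
  simp only [add_mul, mul_add, Finset.sum_add_distrib, ite_mul, mul_ite, zero_mul, mul_zero]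
  rw [Finset.sum_ite_eq Finset.univ b, Finset.sum_ite_eq' Finset.univ a]
  simp only [Finset.mem_univ, if_true]
  have : ∑ x : V, (1 - c) * μ x * ((1 - c) * μ b) = (1 - c) * ((1 - c) * μ b) := by
    rw [← Finset.sum_mul, ← Finset.mul_sum, hμ1, mul_one]
  rw [this]
  split_ifs with h <;> ring

end aux

section aux2
variable {V : Type*} [Fintype V] [DecidableEq V] (μ : V → ℝ) {n : ℕ}

lemma Kprod_rowsum (hμ1 : ∑ v : V, μ v = 1) (c : ℝ) (x : Fin n → V) :
    ∑ y : Fin n → V, ∏ i, kk μ c (x i) (y i) = 1 := by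
  have h := Finset.prod_univ_sum (fun _ : Fin n => (Finset.univ : Finset V))
    (fun i v => kk μ c (x i) v)
  rw [Fintype.piFinset_univ] at h
  rw [← h]
  exact Finset.prod_eq_one fun i _ => kk_rowsum μ hμ1 c (x i)

lemma Kprod_comp (hμ1 : ∑ v : V, μ v = 1) (c : ℝ) (x y : Fin n → V) :
    ∑ z : Fin n → V, (∏ i, kk μ c (x i) (z i)) * (∏ i, kk μ c (z i) (y i))
      = ∏ i, kk μ (c * c) (x i) (y i) := by
  have h := Finset.prod_univ_sum (fun _ : Fin n => (Finset.univ : Finset V))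
    (fun i v => kk μ c (x i) v * kk μ c v (y i))
  rw [Fintype.piFinset_univ] at h
  calc ∑ z : Fin n → V, (∏ i, kk μ c (x i) (z i)) * (∏ i, kk μ c (z i) (y i))
      = ∑ z : Fin n → V, ∏ i, (kk μ c (x i) (z i) * kk μ c (z i) (y i)) :=
        Finset.sum_congr rfl fun z _ => (Finset.prod_mul_distrib).symm
    _ = ∏ i, ∑ v : V, kk μ c (x i) v * kk μ c v (y i) := h.symm
    _ = ∏ i, kk μ (c * c) (x i) (y i) :=
        Finset.prod_congr rfl fun i _ => kk_comp μ hμ1 c (x i) (y i)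

lemma wsum_one (hμ1 : ∑ v : V, μ v = 1) :
    ∑ x : Fin n → V, ∏ i, μ (x i) = 1 := by
  have h := Finset.prod_univ_sum (fun _ : Fin n => (Finset.univ : Finset V))
    (fun _ v => μ v)
  rw [Fintype.piFinset_univ] at h
  rw [← h]
  exact Finset.prod_eq_one fun i _ => hμ1

end aux2

/-- The noise operator `N_η`: each coordinate is kept with probability `η` and
resampled from `μ` with probability `1 - η`, independently. -/
noncomputable def noiseOp {V : Type*} [Fintype V] [DecidableEq V]
    (μ : V → ℝ) (n : ℕ) (η : ℝ) (f : (Fin n → V) → ℝ) (x : Fin n → V) : ℝ :=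
  ∑ y : Fin n → V,
    (∏ i : Fin n, ((if y i = x i then η else 0) + (1 - η) * μ (y i))) * f y

theorem stmt_11 {V : Type*} [Fintype V] [DecidableEq V]
    (μ : V → ℝ) (hμ0 : ∀ v, 0 ≤ μ v) (hμ1 : ∑ v : V, μ v = 1)
    (n : ℕ) (η : ℝ) (hη : η ∈ Set.Icc (0:ℝ) 1)
    (ε : ℝ) (hε : 0 < ε)
    (f : (Fin n → V) → ℝ) (hf : ∀ x, f x ∈ Set.Icc (0:ℝ) 1) :
    ∑ x : Fin n → V, (∏ i : Fin n, μ (x i)) *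
        (if noiseOp μ n η f x ≤ ε then f x else 0) ≤ ε := by
  obtain ⟨hη0, hη1⟩ := hη
  classical
  set c : ℝ := Real.sqrt η with hcdef
  have hc0 : 0 ≤ c := Real.sqrt_nonneg η
  have hc1 : c ≤ 1 := Real.sqrt_le_one.mpr hη1
  have hcc : c * c = η := Real.mul_self_sqrt hη0
  set w : (Fin n → V) → ℝ := fun x => ∏ i, μ (x i) with hwdef
  set K : ℝ → (Fin n → V) → (Fin n → V) → ℝ :=
    fun t x y => ∏ i, kk μ t (x i) (y i) with hKdef
  set g : (Fin n → V) → ℝ :=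
    fun x => if noiseOp μ n η f x ≤ ε then f x else 0 with hgdef
  have hw0 : ∀ x, 0 ≤ w x := fun x => Finset.prod_nonneg fun i _ => hμ0 _
  have hK0 : ∀ t, 0 ≤ t → t ≤ 1 → ∀ x y, 0 ≤ K t x y := fun t ht0 ht1 x y =>
    Finset.prod_nonneg fun i _ => kk_nonneg μ hμ0 ht0 ht1 _ _
  have hg0 : ∀ x, 0 ≤ g x := by
    intro x
    by_cases hx : noiseOp μ n η f x ≤ ε <;> simp [hgdef, hx, (hf x).1]
  have hgf : ∀ x, g x ≤ f x := by
    intro x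
    by_cases hx : noiseOp μ n η f x ≤ ε <;> simp [hgdef, hx, (hf x).1]
  have hNf : ∀ x, noiseOp μ n η f x = ∑ y, K η x y * f y := fun x => rfl
  have hrow : ∀ t x, ∑ y, K t x y = 1 := fun t x => Kprod_rowsum μ hμ1 t x
  have hsymm : ∀ t (x y : Fin n → V), w x * K t x y = w y * K t y x := by
    intro t x y
    calc w x * K t x y = ∏ i, μ (x i) * kk μ t (x i) (y i) := Finset.prod_mul_distrib.symm
      _ = ∏ i, μ (y i) * kk μ t (y i) (x i) :=
          Finset.prod_congr rfl fun i _ => kk_symm μ t (x i) (y i)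
      _ = w y * K t y x := Finset.prod_mul_distrib
  have hcomp : ∀ x y : Fin n → V, ∑ z, K c x z * K c z y = K η x y := by
    intro x y
    rw [show η = c * c from hcc.symm]
    exact Kprod_comp μ hμ1 c x y
  set Ncg : (Fin n → V) → ℝ := fun z => ∑ y, K c z y * g y with hNcgdef
  set T : ℝ := ∑ x, w x * g x with hTdef
  have hT0 : 0 ≤ T := Finset.sum_nonneg fun x _ => mul_nonneg (hw0 x) (hg0 x)
  -- inner weighted sum identity
  have hinner : ∀ z : Fin n → V, ∑ x, (w x * K c x z) * g x = w z * Ncg z := by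
    intro z
    rw [hNcgdef]
    rw [Finset.mul_sum]
    exact Finset.sum_congr rfl fun x _ => by rw [hsymm c x z]; ring
  -- Step D : T = ∑ z, w z * Ncg z
  have hstepD : T = ∑ z, w z * Ncg z := by
    calc T = ∑ x, ∑ z, (w x * K c x z) * g x := by
          refine Finset.sum_congr rfl fun x _ => ?_
          rw [← Finset.sum_mul, ← Finset.mul_sum, hrow c x, mul_one]
      _ = ∑ z, ∑ x, (w x * K c x z) * g x := Finset.sum_comm
      _ = ∑ z, w z * Ncg z := Finset.sum_congr rfl fun z _ => hinner z
  -- Step C : quadratic form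
  have hstepC : ∑ x, (w x * g x) * (∑ y, K η x y * g y)
      = ∑ z, (w z * Ncg z) * Ncg z := by
    calc ∑ x, (w x * g x) * (∑ y, K η x y * g y)
        = ∑ x, ∑ y, ∑ z, ((w x * K c x z) * g x) * (K c z y * g y) := by
          refine Finset.sum_congr rfl fun x _ => ?_
          rw [Finset.mul_sum]
          refine Finset.sum_congr rfl fun y _ => ?_
          rw [← hcomp x y, Finset.sum_mul, Finset.mul_sum]
          exact Finset.sum_congr rfl fun z _ => by ring
      _ = ∑ x, ∑ z, ∑ y, ((w x * K c x z) * g x) * (K c z y * g y) :=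
          Finset.sum_congr rfl fun x _ => Finset.sum_comm
      _ = ∑ z, ∑ x, ∑ y, ((w x * K c x z) * g x) * (K c z y * g y) := Finset.sum_comm
      _ = ∑ z, (∑ x, (w x * K c x z) * g x) * (∑ y, K c z y * g y) := by
          refine Finset.sum_congr rfl fun z _ => ?_
          rw [Finset.sum_mul]
          exact Finset.sum_congr rfl fun x _ => (Finset.mul_sum _ _ _).symm
      _ = ∑ z, (w z * Ncg z) * Ncg z := by
          refine Finset.sum_congr rfl fun z _ => ?_
          rw [hinner z]
  -- Cauchy–Schwarz : T^2 ≤ quadratic form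
  have hCS : T * T ≤ ∑ z, (w z * Ncg z) * Ncg z := by
    have h1 : T = ∑ z, Real.sqrt (w z) * (Real.sqrt (w z) * Ncg z) := by
      rw [hstepD]
      refine Finset.sum_congr rfl fun z _ => ?_
      rw [← mul_assoc, Real.mul_self_sqrt (hw0 z)]
    have h2 := Finset.sum_mul_sq_le_sq_mul_sq Finset.univ
      (fun z => Real.sqrt (w z)) (fun z => Real.sqrt (w z) * Ncg z)
    have h3 : (∑ z : Fin n → V, (Real.sqrt (w z)) ^ 2) = 1 := by
      have he : ∀ z : Fin n → V, (Real.sqrt (w z)) ^ 2 = w z := fun z => Real.sq_sqrt (hw0 z)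
      calc (∑ z : Fin n → V, (Real.sqrt (w z)) ^ 2) = ∑ z, w z :=
            Finset.sum_congr rfl fun z _ => he z
        _ = 1 := wsum_one μ hμ1
    have h4 : ∀ z : Fin n → V, (Real.sqrt (w z) * Ncg z) ^ 2 = (w z * Ncg z) * Ncg z := by
      intro z; rw [mul_pow, Real.sq_sqrt (hw0 z)]; ring
    calc T * T = T ^ 2 := (sq T).symm
      _ ≤ (∑ z : Fin n → V, (Real.sqrt (w z)) ^ 2) *
          (∑ z : Fin n → V, (Real.sqrt (w z) * Ncg z) ^ 2) := by rw [h1]; exact h2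
      _ = ∑ z, (w z * Ncg z) * Ncg z := by
          rw [h3, one_mul]; exact Finset.sum_congr rfl fun z _ => h4 z
  -- upper bound
  have hQle : ∑ x, (w x * g x) * (∑ y, K η x y * g y) ≤ ε * T := by
    rw [hTdef, Finset.mul_sum]
    refine Finset.sum_le_sum fun x _ => ?_
    have hNgNf : (∑ y, K η x y * g y) ≤ noiseOp μ n η f x := by
      rw [hNf x]
      exact Finset.sum_le_sum fun y _ =>
        mul_le_mul_of_nonneg_left (hgf y) (hK0 η hη0 hη1 x y)
    by_cases hx : noiseOp μ n η f x ≤ ε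
    · have hgx : g x = f x := by rw [hgdef]; simp [hx]
      have hwg : 0 ≤ w x * g x := mul_nonneg (hw0 x) (hg0 x)
      calc (w x * g x) * (∑ y, K η x y * g y) ≤ (w x * g x) * noiseOp μ n η f x :=
            mul_le_mul_of_nonneg_left hNgNf hwg
        _ ≤ (w x * g x) * ε := mul_le_mul_of_nonneg_left hx hwg
        _ = ε * (w x * g x) := by ring
    · have hgx : g x = 0 := by rw [hgdef]; simp [hx]
      rw [hgx]
      simp
  have hfin : T * T ≤ ε * T := le_trans hCS (hstepC ▸ hQle)
  nlinarith [hfin, hT0, hε]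
end

section
/- Let V be a finite set with probability measure μ and let N_η be the noise operator with parameter η ∈ [0,1) on functions V^n → [-1,1]. Then the sum of influences of N_η f satisfies Σ_{i=1}^n Inf_i(N_η f) ≤ (1 − η²)^{-2}, where Inf_i(g) = E_{x}[Var_{x_i}(g)] = Σ_{S ∋ i} ĝ(S)², with ĝ(S) the Fourier/eigenbasis coefficients. In particular, at most (1 − η²)^{-2}/τ variables have influence at least τ on N_η f. -/
open Finset

/-- The degree of a multi-index `S : Fin n → Fin (m+1)`: the number of
nontrivial coordinates (index `0` is the trivial eigenfunction). -/
def mdeg {n m : ℕ} (S : Fin n → Fin (m + 1)) : ℕ :=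
  (Finset.univ.filter (fun i => S i ≠ 0)).card

/-- The influence of variable `i` on the noisy function `N_η f`, in terms of the
Fourier coefficients `c` of `f`: `Inf_i(N_η f) = ∑_{S : i ∈ supp S} (η^{|S|} c(S))²`. -/
noncomputable def noisyInf {n m : ℕ} (η : ℝ) (c : (Fin n → Fin (m + 1)) → ℝ)
    (i : Fin n) : ℝ :=
  ∑ S ∈ Finset.univ.filter (fun S : Fin n → Fin (m + 1) => S i ≠ 0),
    (η ^ mdeg S * c S) ^ 2

lemma key_aux (x : ℝ) (hx0 : 0 ≤ x) (hx1 : x < 1) (k : ℕ) :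
    (k : ℝ) * x ^ k ≤ ((1 - x)⁻¹) ^ 2 := by
  have h1 : (0:ℝ) < 1 - x := by linarith
  have hgeom : ∑ j ∈ Finset.range k, x ^ j ≤ (1 - x)⁻¹ := by
    have := geom_sum_Ico_le_of_lt_one hx0 hx1 (m := 0) (n := k)
    rw [Finset.range_eq_Ico]
    calc ∑ j ∈ Finset.Ico 0 k, x ^ j ≤ x ^ 0 / (1 - x) := this
      _ = (1 - x)⁻¹ := by rw [pow_zero, one_div]
  have hstep : (k : ℝ) * x ^ k ≤ ∑ j ∈ Finset.range k, x ^ j := by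
    calc (k : ℝ) * x ^ k = ∑ _j ∈ Finset.range k, x ^ k := by
          simp [mul_comm]
      _ ≤ ∑ j ∈ Finset.range k, x ^ j := by
          apply Finset.sum_le_sum
          intro j hj
          exact pow_le_pow_of_le_one hx0 hx1.le (Finset.mem_range.mp hj).le
  have hone : (1:ℝ) ≤ (1 - x)⁻¹ := by
    rw [le_inv_comm₀ one_pos h1]; simpa using hx0
  calc (k : ℝ) * x ^ k ≤ (1 - x)⁻¹ := hstep.trans hgeom
    _ ≤ ((1 - x)⁻¹) ^ 2 := by nlinarith

/-- Claim A.2 (Lemma 2.3.6 of DFR), in the eigenbasis formulation: if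
`‖f‖₂² = ∑ c(S)² ≤ 1` then the total influence of `N_η f` is at most `(1-η²)⁻²`,
and at most `(1-η²)⁻² / τ` variables have influence at least `τ` on `N_η f`. -/
theorem stmt_12 {n m : ℕ} (η : ℝ) (hη0 : 0 ≤ η) (hη1 : η < 1)
    (c : (Fin n → Fin (m + 1)) → ℝ)
    (hc : ∑ S : Fin n → Fin (m + 1), c S ^ 2 ≤ 1) :
    (∑ i : Fin n, noisyInf η c i ≤ ((1 - η ^ 2)⁻¹) ^ 2) ∧
      ∀ τ : ℝ, 0 < τ →
        ((Finset.univ.filter (fun i : Fin n => τ ≤ noisyInf η c i)).card : ℝ) ≤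
          ((1 - η ^ 2)⁻¹) ^ 2 / τ := by
  have hη2 : η ^ 2 < 1 := by nlinarith
  have hη2' : (0:ℝ) ≤ η ^ 2 := sq_nonneg η
  have hswap : ∑ i : Fin n, noisyInf η c i
      = ∑ S : Fin n → Fin (m + 1), (mdeg S : ℝ) * (η ^ mdeg S * c S) ^ 2 := by
    unfold noisyInf
    rw [Finset.sum_comm' (s := Finset.univ) (t := fun i => Finset.univ.filter
        (fun S : Fin n → Fin (m + 1) => S i ≠ 0))
      (t' := Finset.univ) (s' := fun S => Finset.univ.filter (fun i : Fin n => S i ≠ 0))]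
    · simp [mdeg, Finset.sum_const, nsmul_eq_mul]
    · intro i S; simp
  have hbound : ∀ S : Fin n → Fin (m + 1),
      (mdeg S : ℝ) * (η ^ mdeg S * c S) ^ 2 ≤ ((1 - η ^ 2)⁻¹) ^ 2 * c S ^ 2 := by
    intro S
    have h1 : (mdeg S : ℝ) * (η ^ mdeg S * c S) ^ 2
        = ((mdeg S : ℝ) * (η ^ 2) ^ mdeg S) * c S ^ 2 := by ring
    rw [h1]
    apply mul_le_mul_of_nonneg_right _ (sq_nonneg _)
    exact key_aux (η ^ 2) hη2' hη2 (mdeg S)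
  have hmain : ∑ i : Fin n, noisyInf η c i ≤ ((1 - η ^ 2)⁻¹) ^ 2 := by
    rw [hswap]
    calc ∑ S : Fin n → Fin (m + 1), (mdeg S : ℝ) * (η ^ mdeg S * c S) ^ 2
        ≤ ∑ S : Fin n → Fin (m + 1), ((1 - η ^ 2)⁻¹) ^ 2 * c S ^ 2 :=
          Finset.sum_le_sum fun S _ => hbound S
      _ = ((1 - η ^ 2)⁻¹) ^ 2 * ∑ S : Fin n → Fin (m + 1), c S ^ 2 := by
          rw [Finset.mul_sum]
      _ ≤ ((1 - η ^ 2)⁻¹) ^ 2 * 1 := by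
          apply mul_le_mul_of_nonneg_left hc (sq_nonneg _)
      _ = ((1 - η ^ 2)⁻¹) ^ 2 := mul_one _
  refine ⟨hmain, fun τ hτ => ?_⟩
  have hnonneg : ∀ i : Fin n, 0 ≤ noisyInf η c i := fun i =>
    Finset.sum_nonneg fun S _ => sq_nonneg _
  have hmarkov : τ * ((Finset.univ.filter
      (fun i : Fin n => τ ≤ noisyInf η c i)).card : ℝ) ≤ ∑ i : Fin n, noisyInf η c i := by
    calc τ * ((Finset.univ.filter (fun i : Fin n => τ ≤ noisyInf η c i)).card : ℝ)
        = ∑ _i ∈ Finset.univ.filter (fun i : Fin n => τ ≤ noisyInf η c i), τ := by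
          simp [mul_comm]
      _ ≤ ∑ i ∈ Finset.univ.filter (fun i : Fin n => τ ≤ noisyInf η c i), noisyInf η c i :=
          Finset.sum_le_sum fun i hi => (Finset.mem_filter.mp hi).2
      _ ≤ ∑ i : Fin n, noisyInf η c i :=
          Finset.sum_le_sum_of_subset_of_nonneg (Finset.filter_subset _ _)
            (fun i _ _ => hnonneg i)
  rw [le_div_iff₀ hτ]
  calc ((Finset.univ.filter (fun i : Fin n => τ ≤ noisyInf η c i)).card : ℝ) * τ
      = τ * _ := mul_comm _ _
    _ ≤ ∑ i : Fin n, noisyInf η c i := hmarkov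
    _ ≤ ((1 - η ^ 2)⁻¹) ^ 2 := hmain
end

section
/- Fix 0 < p < 1/2 and let k = ⌊pn⌋. Let J ⊆ [n] and w ∈ {0,1}^J. With f : binom([n],k) → [0,1] and g defined from f as in the Up Lemma (g(x) = binom(|x|,k)^{-1} Σ_{x' ⊆ x, |x'|=k} f(x') for |x| ≥ k, else 0), define V_w(g) = Σ_{x ∈ {0,1}^{[n]∖J}} g(w,x)·μ_p(w,x) and V_w(f) = Σ_{x : |x| = k − |w|} f(w,x)/binom(n,k), where μ_p is the p-biased product measure on {0,1}^n. Then for all sufficiently large n (depending on p and |J|), V_w(f) ≤ 5·V_w(g). -/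
/-!
Fix a `(k - |w|)`-set `y` outside `J`. Every `x ⊇ y` outside `J` contributes to `V_w(g)`
through the `k`-subset `w ∪ y` of `w ∪ x`, so `V_w(g) ≥ ∑_y f(w, y) · W`, where `W`
(`downWeight`) is the `μ_p`-weight of these supersets, each divided by `binom(|w ∪ x|, k)`.
With `m = n - |J| - (k - |w|)`, the identity `binom(n, k+i) binom(k+i, k) = binom(n, k)
binom(n-k, i)` and `binom(n-k, i) ≤ 2 binom(m, i)` for `i ≤ t ≈ √(3n)` give
`W ≥ P(k ≤ X ≤ k + t) / (2 binom(n, k))` for `X ~ Bin(n, p)`.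
In place of the central limit theorem, `P(k ≤ X ≤ k + t) ≥ 2/5` follows from Chebyshev's
inequality, `P(|X - k| > t) ≤ 1/12`, together with the near-symmetry of the binomial weights
around `k = ⌊pn⌋`: since `p ≤ 1/2`, `b(k + i) ≥ (1 - C/n)^i b(k - i)` with `C` depending
only on `p`.
-/

open Finset

/-- `V_w(g) = ∑_{x ⊆ [n] ∖ J} g(w,x) μ_p(w,x)`. -/
noncomputable def Vwg {n : ℕ} (p : ℝ) (J w : Finset (Fin n))
    (g : Finset (Fin n) → ℝ) : ℝ :=
  ∑ x : Finset (Fin n),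
    if Disjoint x J then
      g (w ∪ x) * p ^ (w.card + x.card) * (1 - p) ^ (n - w.card - x.card)
    else 0

/-- `V_w(f) = ∑_{x ⊆ [n] ∖ J, |x| = k - |w|} f(w,x) / binom(n,k)`. -/
noncomputable def Vwf {n : ℕ} (k : ℕ) (J w : Finset (Fin n))
    (f : Finset (Fin n) → ℝ) : ℝ :=
  ∑ x : Finset (Fin n),
    if Disjoint x J ∧ x.card + w.card = k then f (w ∪ x) / (n.choose k : ℝ)
    else 0

/-- `∑ binom(|z|, k)⁻¹ μ_p(z)` over the sets `z` obtained from a fixed `k`-set by adding `i` of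
`m` further elements, for all `i`. -/
noncomputable def downWeight (n : ℕ) (p : ℝ) (k m : ℕ) : ℝ :=
  ∑ i ∈ range (m + 1),
    ((k + i).choose k : ℝ)⁻¹ * p ^ (k + i) * (1 - p) ^ (n - (k + i)) * m.choose i

lemma injOn_union_left {α : Type*} [DecidableEq α] (w : Finset α) {T : Finset (Finset α)}
    (hT : ∀ y ∈ T, Disjoint w y) : Set.InjOn (w ∪ ·) T := fun y₁ h₁ y₂ h₂ h =>
  disjoint_injOn_union_left w (hT y₁ h₁) (hT y₂ h₂) (by simpa only [union_comm] using h)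

lemma sum_powersetCard_union_le {α : Type*} [DecidableEq α] {k : ℕ} {w x : Finset α}
    (hwx : Disjoint w x) (hk : w.card ≤ k) {f : Finset α → ℝ}
    (hf : ∀ s : Finset α, s.card = k → 0 ≤ f s) :
    ∑ y ∈ x.powersetCard (k - w.card), f (w ∪ y) ≤
      ∑ s ∈ (w ∪ x).powersetCard k, f s := by
  rw [← sum_image (injOn_union_left w fun y hy => hwx.mono_right (mem_powersetCard.1 hy).1)]
  refine sum_le_sum_of_subset_of_nonneg ?_ fun s hs _ => hf s (mem_powersetCard.1 hs).2
  simp only [subset_iff, mem_image, mem_powersetCard]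
  rintro _ ⟨y, ⟨hyx, hyc⟩, rfl⟩
  refine ⟨union_subset_union_right hyx, ?_⟩
  rw [card_union_of_disjoint (hwx.mono_right hyx)]
  omega

lemma sum_Icc_apply_card {α β : Type*} [DecidableEq α] [AddCommMonoid β] {y S : Finset α}
    (hyS : y ⊆ S) (c : ℕ → β) :
    ∑ x ∈ Icc y S, c x.card =
      ∑ i ∈ range ((S \ y).card + 1), (S \ y).card.choose i • c (y.card + i) := by
  have hdisj : ∀ z ∈ (S \ y).powerset, Disjoint y z := fun z hz =>
    disjoint_of_subset_right (mem_powerset.1 hz) disjoint_sdiff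
  rw [Icc_eq_image_powerset hyS, sum_image (injOn_union_left y hdisj),
    ← sum_powerset_apply_card]
  exact sum_congr rfl fun z hz => by rw [card_union_of_disjoint (hdisj z hz)]

lemma sum_powerset_sum_powersetCard_comm {α β : Type*} [DecidableEq α] [AddCommMonoid β]
    (S : Finset α) (r : ℕ) (F : Finset α → Finset α → β) :
    ∑ x ∈ S.powerset, ∑ y ∈ x.powersetCard r, F x y =
      ∑ y ∈ S.powersetCard r, ∑ x ∈ Icc y S, F x y := by
  refine sum_comm' fun x y => ?_
  simp only [mem_powerset, mem_powersetCard, mem_Icc]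
  exact ⟨fun ⟨hxS, hyx, hyc⟩ => ⟨⟨hyx, hxS⟩, hyx.trans hxS, hyc⟩,
    fun ⟨⟨hyx, hxS⟩, _, hyc⟩ => ⟨hxS, hyx, hyc⟩⟩

lemma sum_ite_disjoint_eq_sum_powerset {n : ℕ} {β : Type*} [AddCommMonoid β]
    (J : Finset (Fin n)) (F : Finset (Fin n) → β) :
    ∑ x : Finset (Fin n), (if Disjoint x J then F x else 0) =
      ∑ x ∈ (univ \ J).powerset, F x := by
  rw [← sum_filter]
  congr 1
  ext x
  simp [subset_sdiff]

lemma sum_powersetCard_mul_le_upFn {n k : ℕ} {f : Finset (Fin n) → ℝ}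
    (hf : ∀ s : Finset (Fin n), s.card = k → 0 ≤ f s) {w x : Finset (Fin n)}
    (hwx : Disjoint w x) (hk : w.card ≤ k) :
    (∑ y ∈ x.powersetCard (k - w.card), f (w ∪ y)) * ((w.card + x.card).choose k : ℝ)⁻¹ ≤
      upFn k f (w ∪ x) := by
  rw [upFn, card_union_of_disjoint hwx]
  split_ifs with hkx
  · rw [mul_comm]
    exact mul_le_mul_of_nonneg_left (sum_powersetCard_union_le hwx hk hf) (by positivity)
  · rw [powersetCard_eq_empty.2 (by omega), sum_empty, zero_mul]

lemma sum_mul_downWeight_le_Vwg {n k : ℕ} {p : ℝ} (hp0 : 0 ≤ p) (hp1 : p ≤ 1)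
    {J w : Finset (Fin n)} (hw : w ⊆ J) (hk : w.card ≤ k) {f : Finset (Fin n) → ℝ}
    (hf : ∀ s : Finset (Fin n), s.card = k → 0 ≤ f s) :
    ∑ y ∈ (univ \ J).powersetCard (k - w.card),
        f (w ∪ y) * downWeight n p k (n - J.card - (k - w.card)) ≤
      Vwg p J w (upFn k f) := by
  set S := univ \ J
  set c : ℕ → ℝ := fun s =>
    ((w.card + s).choose k : ℝ)⁻¹ * (p ^ (w.card + s) * (1 - p) ^ (n - w.card - s))
  have hwS : ∀ x ∈ S.powerset, Disjoint w x := fun x hx =>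
    disjoint_of_subset_left hw (subset_sdiff.1 (mem_powerset.1 hx)).2.symm
  have hcard : S.card = n - J.card := by
    rw [card_sdiff_of_subset (subset_univ J), card_univ, Fintype.card_fin]
  have hinner : ∀ y ∈ S.powersetCard (k - w.card),
      ∑ x ∈ Icc y S, c x.card = downWeight n p k (n - J.card - (k - w.card)) := by
    intro y hy
    obtain ⟨hyS, hyc⟩ := mem_powersetCard.1 hy
    rw [sum_Icc_apply_card hyS, card_sdiff_of_subset hyS, hcard, hyc, downWeight]
    refine sum_congr rfl fun i _ => ?_
    simp only [c, nsmul_eq_mul, show w.card + (k - w.card + i) = k + i by omega,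
      show n - w.card - (k - w.card + i) = n - (k + i) by omega]
    ring
  calc ∑ y ∈ S.powersetCard (k - w.card),
          f (w ∪ y) * downWeight n p k (n - J.card - (k - w.card))
      = ∑ x ∈ S.powerset, ∑ y ∈ x.powersetCard (k - w.card), f (w ∪ y) * c x.card := by
        rw [sum_powerset_sum_powersetCard_comm]
        exact sum_congr rfl fun y hy => by rw [← mul_sum, hinner y hy]
    _ ≤ ∑ x ∈ S.powerset, upFn k f (w ∪ x) * p ^ (w.card + x.card) *
          (1 - p) ^ (n - w.card - x.card) := by
        refine sum_le_sum fun x hx => ?_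
        have hμ : 0 ≤ p ^ (w.card + x.card) * (1 - p) ^ (n - w.card - x.card) := by
          have : 0 ≤ 1 - p := by linarith
          positivity
        rw [← sum_mul, mul_assoc (upFn _ _ _), ← mul_assoc]
        exact mul_le_mul_of_nonneg_right (sum_powersetCard_mul_le_upFn hf (hwS x hx) hk) hμ
    _ = Vwg p J w (upFn k f) := by rw [Vwg, sum_ite_disjoint_eq_sum_powerset]

lemma Vwf_eq_sum {n k : ℕ} (J w : Finset (Fin n)) (f : Finset (Fin n) → ℝ)
    (hk : w.card ≤ k) :
    Vwf k J w f = ∑ y ∈ (univ \ J).powersetCard (k - w.card), f (w ∪ y) / n.choose k := by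
  rw [Vwf, ← sum_filter]
  congr 1
  ext y
  simp only [mem_filter, mem_univ, true_and, mem_powersetCard, subset_sdiff, subset_univ]
  exact and_congr_right fun _ => by omega

noncomputable def binomWeight (n : ℕ) (p : ℝ) (ν : ℕ) : ℝ :=
  n.choose ν * p ^ ν * (1 - p) ^ (n - ν)

section binomWeight

variable {n : ℕ} {p : ℝ}

lemma binomWeight_eq_eval (ν : ℕ) :
    binomWeight n p ν = (bernsteinPolynomial ℝ n ν).eval p := by
  simp [binomWeight, bernsteinPolynomial]

lemma binomWeight_nonneg (hp0 : 0 ≤ p) (hp1 : p ≤ 1) (ν : ℕ) : 0 ≤ binomWeight n p ν := by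
  have : 0 ≤ 1 - p := by linarith
  unfold binomWeight; positivity

lemma sum_binomWeight (n : ℕ) (p : ℝ) : ∑ ν ∈ range (n + 1), binomWeight n p ν = 1 := by
  simpa [binomWeight_eq_eval, Polynomial.eval_finsetSum] using
    congrArg (Polynomial.eval p) (bernsteinPolynomial.sum ℝ n)

lemma sum_sq_mul_binomWeight (n : ℕ) (p : ℝ) :
    ∑ ν ∈ range (n + 1), (n * p - ν) ^ 2 * binomWeight n p ν = n * p * (1 - p) := by
  simpa [binomWeight_eq_eval, Polynomial.eval_finsetSum, mul_assoc] using
    congrArg (Polynomial.eval p) (bernsteinPolynomial.variance ℝ n)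

lemma binomWeight_succ_mul {m : ℕ} (h : m < n) :
    binomWeight n p (m + 1) * ((m + 1) * (1 - p)) = binomWeight n p m * ((n - m) * p) := by
  have hchoose : (n.choose (m + 1) : ℝ) * (m + 1) = n.choose m * (n - m) := by
    rw [← Nat.cast_sub h.le]
    exact_mod_cast Nat.choose_succ_right_eq n m
  have hpow : (1 - p) ^ (n - m) = (1 - p) ^ (n - (m + 1)) * (1 - p) := by
    rw [← pow_succ, show n - (m + 1) + 1 = n - m by omega]
  simp only [binomWeight, hpow, pow_succ]
  linear_combination (p ^ m * p * (1 - p) ^ (n - (m + 1)) * (1 - p)) * hchoose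

lemma sum_binomWeight_le_of_le_abs (hp0 : 0 ≤ p) (hp1 : p ≤ 1) {s : Finset ℕ}
    (hs : s ⊆ range (n + 1)) {r : ℝ} (hr : 0 < r) (hfar : ∀ ν ∈ s, r ≤ |n * p - ν|) :
    ∑ ν ∈ s, binomWeight n p ν ≤ n * p * (1 - p) / r ^ 2 := by
  calc ∑ ν ∈ s, binomWeight n p ν
      ≤ ∑ ν ∈ s, (n * p - ν) ^ 2 * binomWeight n p ν / r ^ 2 := by
        refine sum_le_sum fun ν hν => ?_
        rw [le_div_iff₀ (by positivity), mul_comm]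
        have hsq : r ^ 2 ≤ (n * p - ν) ^ 2 := by
          simpa only [sq_abs] using pow_le_pow_left₀ hr.le (hfar ν hν) 2
        exact mul_le_mul_of_nonneg_right hsq (binomWeight_nonneg hp0 hp1 ν)
    _ ≤ ∑ ν ∈ range (n + 1), (n * p - ν) ^ 2 * binomWeight n p ν / r ^ 2 :=
        sum_le_sum_of_subset_of_nonneg hs fun ν _ _ => by
          have := binomWeight_nonneg (n := n) hp0 hp1 ν
          positivity
    _ = n * p * (1 - p) / r ^ 2 := by rw [← sum_div, sum_sq_mul_binomWeight]

/- The cross ratio `b(k+i+1) b(k-i) / (b(k+i) b(k-i-1))` of binomial weights equals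
`(N-K-I)(N-K+I+1)p² / ((K-I)(K+I+1)q²)`. With `θ = pN - K ∈ [0, 1)`, the difference of the two
products is `pqN(2θ - (q - p))` plus a nonnegative term, and `C/N` absorbs `pqN` because
`(K-I)(K+I+1) ≥ (pN)²/2`. -/
lemma pair_ratio_ineq {N K I : ℝ} (hp0 : 0 < p) (hp : p ≤ 1 / 2) (hK : K ≤ p * N)
    (hK' : p * N < K + 1) (hI : 0 ≤ I) (hIK : 2 * I + 1 ≤ K) :
    (1 - 4 / (p * (1 - p) ^ 2) / N) * ((K - I) * (K + I + 1)) * (1 - p) ^ 2 ≤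
      (N - K - I) * (N - K + I + 1) * p ^ 2 := by
  set q := 1 - p with hq
  set θ := p * N - K with hθ
  have hq0 : 0 < q := by linarith
  have hN : 0 < N := by nlinarith
  have hθ0 : 0 ≤ θ := by linarith
  have hθ1 : θ < 1 := by linarith
  have hrest : 0 ≤ p ^ 2 * (θ - I) * (θ + I + 1) + q ^ 2 * (I + 1 - θ) * (θ + I) := by
    rcases le_or_gt θ I with h | h
    · have : 0 ≤ (q ^ 2 - p ^ 2) * ((I - θ) * (θ + I + 1)) :=
        mul_nonneg (by nlinarith) (mul_nonneg (by linarith) (by linarith))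
      nlinarith [mul_nonneg (mul_nonneg hq0.le hq0.le) hθ0]
    · have h1 : 0 ≤ p ^ 2 * (θ - I) * (θ + I + 1) :=
        mul_nonneg (mul_nonneg (by positivity) (by linarith)) (by linarith)
      have h2 : 0 ≤ q ^ 2 * (I + 1 - θ) * (θ + I) :=
        mul_nonneg (mul_nonneg (by positivity) (by linarith)) (by linarith)
      linarith
  have hdiff : (K - I) * (K + I + 1) * q ^ 2 - p * q * N ≤
      (N - K - I) * (N - K + I + 1) * p ^ 2 := by
    have hid : (N - K - I) * (N - K + I + 1) * p ^ 2 - (K - I) * (K + I + 1) * q ^ 2 =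
        p * q * N * (2 * θ - (q - p)) +
          (p ^ 2 * (θ - I) * (θ + I + 1) + q ^ 2 * (I + 1 - θ) * (θ + I)) := by
      rw [hq, hθ]; ring
    have : 0 ≤ p * q * N * (2 * θ + 1 - (q - p)) := mul_nonneg (by positivity) (by linarith)
    nlinarith
  have hprod : p ^ 2 * N ^ 2 / 2 ≤ (K - I) * (K + I + 1) := by
    have h1 : p * N / 2 ≤ K - I := by linarith
    have h2 : p * N ≤ K + I + 1 := by linarith
    nlinarith [mul_le_mul h1 h2 (by positivity) (by linarith)]
  have hcorr : p * q * N ≤ 4 / (p * q ^ 2) / N * ((K - I) * (K + I + 1) * q ^ 2) := by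
    calc p * q * N ≤ 2 * p * N := by nlinarith
      _ = 4 / (p * q ^ 2) / N * (p ^ 2 * N ^ 2 / 2 * q ^ 2) := by field_simp; ring
      _ ≤ _ := by gcongr
  nlinarith

lemma binomWeight_pos (hp0 : 0 < p) (hp1 : p < 1) {ν : ℕ} (hν : ν ≤ n) :
    0 < binomWeight n p ν := by
  have : 0 < 1 - p := by linarith
  have : 0 < (n.choose ν : ℝ) := by exact_mod_cast Nat.choose_pos hν
  unfold binomWeight; positivity

lemma binomWeight_pair_step (hp0 : 0 < p) (hp : p ≤ 1 / 2) {k i : ℕ} (hk : (k : ℝ) ≤ p * n)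
    (hk' : p * n < k + 1) (hik : 2 * i + 3 ≤ k) (hkn : k + i < n) :
    (1 - 4 / (p * (1 - p) ^ 2) / n) * binomWeight n p (k + i) * binomWeight n p (k - (i + 1)) ≤
      binomWeight n p (k + (i + 1)) * binomWeight n p (k - i) := by
  have hup := binomWeight_succ_mul (p := p) hkn
  have hdown := binomWeight_succ_mul (p := p) (m := k - (i + 1)) (n := n) (by omega)
  rw [show k - (i + 1) + 1 = k - i by omega, Nat.cast_sub (by omega : i + 1 ≤ k)] at hdown
  push_cast at hup hdown
  have hpair := pair_ratio_ineq (N := n) (K := k) (I := i) hp0 hp hk hk' (by positivity)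
    (by exact_mod_cast (by omega : 2 * i + 1 ≤ k))
  have hki : (i : ℝ) + 1 ≤ k := by exact_mod_cast (by omega : i + 1 ≤ k)
  have hq : 0 < 1 - p := by linarith
  have hD : 0 < ((k : ℝ) + i + 1) * (1 - p) * (((k : ℝ) - i) * (1 - p)) := by
    have : (0 : ℝ) < k - i := by linarith
    positivity
  have hB := mul_nonneg (binomWeight_nonneg (n := n) hp0.le (by linarith) (k + i))
    (binomWeight_nonneg (n := n) hp0.le (by linarith) (k - (i + 1)))
  refine le_of_mul_le_mul_right ?_ hD
  calc _ = (1 - 4 / (p * (1 - p) ^ 2) / n) * (((k : ℝ) - i) * (k + i + 1)) * (1 - p) ^ 2 *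
          (binomWeight n p (k + i) * binomWeight n p (k - (i + 1))) := by ring
    _ ≤ (n - k - i) * (n - k + i + 1) * p ^ 2 *
          (binomWeight n p (k + i) * binomWeight n p (k - (i + 1))) :=
        mul_le_mul_of_nonneg_right hpair hB
    _ = _ := by
        rw [show k + (i + 1) = k + i + 1 by omega]
        linear_combination (-(binomWeight n p (k - (i + 1)) * ((n - k + i + 1) * p))) * hup -
          (binomWeight n p (k + i + 1) * ((k + i + 1) * (1 - p))) * hdown

lemma pow_mul_binomWeight_sub_le (hp0 : 0 < p) (hp : p ≤ 1 / 2) {k t : ℕ}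
    (hk : (k : ℝ) ≤ p * n) (hk' : p * n < k + 1) (htk : 2 * t + 1 ≤ k) (hkt : k + t ≤ n)
    (hn : 4 / (p * (1 - p) ^ 2) ≤ n) {i : ℕ} (hi : i ≤ t) :
    (1 - 4 / (p * (1 - p) ^ 2) / n) ^ i * binomWeight n p (k - i) ≤ binomWeight n p (k + i) := by
  have hn0 : (0 : ℝ) < n := lt_of_lt_of_le (by have : 0 < 1 - p := (by linarith); positivity) hn
  have hα : 0 ≤ 1 - 4 / (p * (1 - p) ^ 2) / n := by rw [sub_nonneg, div_le_one hn0]; exact hn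
  induction i with
  | zero => simp
  | succ i ih =>
    have hpos := binomWeight_pos (n := n) hp0 (by linarith) (ν := k - i) (by omega)
    refine le_of_mul_le_mul_right ?_ hpos
    calc _ = (1 - 4 / (p * (1 - p) ^ 2) / n) * binomWeight n p (k - (i + 1)) *
            ((1 - 4 / (p * (1 - p) ^ 2) / n) ^ i * binomWeight n p (k - i)) := by ring
      _ ≤ (1 - 4 / (p * (1 - p) ^ 2) / n) * binomWeight n p (k - (i + 1)) *
            binomWeight n p (k + i) :=
          mul_le_mul_of_nonneg_left (ih (by omega))
            (mul_nonneg hα (binomWeight_nonneg hp0.le (by linarith) _))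
      _ ≤ _ := by
          have := binomWeight_pair_step hp0 hp hk hk' (by omega : 2 * i + 3 ≤ k) (by omega)
          linarith

lemma sum_binomWeight_Ico_ge (hp0 : 0 ≤ p) (hp1 : p ≤ 1) {k t : ℕ}
    (hk : (k : ℝ) ≤ p * n) (hk' : p * n < k + 1) (hkt : k + t ≤ n)
    (ht0 : 0 < t) (ht : 3 * n ≤ t * t) :
    11 / 12 ≤ ∑ ν ∈ Ico (k - t) (k + t + 1), binomWeight n p ν := by
  have hsub : Ico (k - t) (k + t + 1) ⊆ range (n + 1) := by
    intro ν; simp only [mem_Ico, mem_range]; omega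
  have hfar : ∀ ν ∈ range (n + 1) \ Ico (k - t) (k + t + 1), (t : ℝ) ≤ |n * p - ν| := by
    intro ν hν
    simp only [mem_sdiff, mem_range, mem_Ico, not_and_or, not_le, not_lt] at hν
    rcases hν.2 with h | h
    · have : (ν : ℝ) + t + 1 ≤ k := by exact_mod_cast (by omega : ν + t + 1 ≤ k)
      rw [abs_of_nonneg (by linarith)]; linarith
    · have : (k : ℝ) + t + 1 ≤ ν := by exact_mod_cast h
      rw [abs_of_nonpos (by linarith)]; linarith
  have htail := sum_binomWeight_le_of_le_abs hp0 hp1 sdiff_subset (Nat.cast_pos.2 ht0) hfar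
  have hvar : (n : ℝ) * p * (1 - p) / t ^ 2 ≤ 1 / 12 := by
    have h3n : 3 * (n : ℝ) ≤ t ^ 2 := by rw [sq]; exact_mod_cast ht
    rw [div_le_div_iff₀ (by positivity) (by norm_num)]
    nlinarith [sq_nonneg (1 - 2 * p)]
  have htotal := sum_sdiff hsub (f := binomWeight n p)
  rw [sum_binomWeight] at htotal
  linarith

lemma sum_Ico_sub_add_eq {M : Type*} [AddCommMonoid M] (f : ℕ → M) {k t : ℕ} (htk : t ≤ k) :
    ∑ ν ∈ Ico (k - t) (k + t + 1), f ν =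
      ∑ i ∈ range t, f (k - (i + 1)) + ∑ i ∈ range (t + 1), f (k + i) := by
  rw [← sum_Ico_consecutive _ (Nat.sub_le k t) (by omega : k ≤ k + t + 1),
    sum_Ico_eq_sum_range, sum_Ico_eq_sum_range, ← sum_range_reflect,
    show k - (k - t) = t by omega, show k + t + 1 - k = t + 1 by omega]
  congr 1
  exact sum_congr rfl fun i hi => by rw [mem_range] at hi; congr 1; omega

lemma two_fifths_le_sum_binomWeight (hp0 : 0 < p) (hp : p ≤ 1 / 2) {k t : ℕ}
    (hk : (k : ℝ) ≤ p * n) (hk' : p * n < k + 1) (htk : 2 * t + 1 ≤ k) (hkt : k + t ≤ n)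
    (hCt : 4 / (p * (1 - p) ^ 2) * t ≤ n / 10) (ht : 3 * n ≤ t * t) :
    2 / 5 ≤ ∑ i ∈ range (t + 1), binomWeight n p (k + i) := by
  set C := 4 / (p * (1 - p) ^ 2)
  have hC : 0 < C := by have : 0 < 1 - p := (by linarith); positivity
  have hn0 : (0 : ℝ) < n := by exact_mod_cast (by omega : 0 < n)
  have ht0 : 0 < t := by nlinarith
  have ht1 : (1 : ℝ) ≤ t := by exact_mod_cast ht0
  have hCn : C ≤ n := by nlinarith
  set α := 1 - C / n
  have hα0 : 0 ≤ α := by rw [sub_nonneg, div_le_one hn0]; exact hCn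
  have hα1 : α ≤ 1 := by have := div_pos hC hn0; linarith
  have hαt : 9 / 10 ≤ α ^ t := by
    have hbern := one_add_mul_sub_le_pow (a := α) (by linarith) t
    have : t * (C / n) ≤ 1 / 10 := by
      rw [← mul_div_assoc, div_le_iff₀ hn0]; linarith
    simp only [α] at hbern ⊢
    linarith
  have hB := binomWeight_nonneg (n := n) hp0.le (by linarith)
  set lower := ∑ i ∈ range t, binomWeight n p (k - (i + 1))
  set upper := ∑ i ∈ range (t + 1), binomWeight n p (k + i)
  have hpair : α ^ t * lower ≤ upper := by
    calc α ^ t * lower ≤ ∑ i ∈ range t, α ^ (i + 1) * binomWeight n p (k - (i + 1)) := by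
          rw [mul_sum]
          refine sum_le_sum fun i hi => mul_le_mul_of_nonneg_right ?_ (hB _)
          exact pow_le_pow_of_le_one hα0 hα1 (by rw [mem_range] at hi; omega)
      _ ≤ ∑ i ∈ range t, binomWeight n p (k + (i + 1)) :=
          sum_le_sum fun i hi => pow_mul_binomWeight_sub_le hp0 hp hk hk' htk hkt hCn
            (by rw [mem_range] at hi; omega)
      _ ≤ upper := by
          simp only [upper, sum_range_succ' _ t]
          linarith [hB (k + 0)]
  have hmass := sum_binomWeight_Ico_ge hp0.le (by linarith) hk hk' hkt ht0 ht
  rw [sum_Ico_sub_add_eq _ (by omega)] at hmass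
  have hlower : 0 ≤ lower := sum_nonneg fun i _ => hB _
  nlinarith

end binomWeight

lemma choose_mul_pow_le_choose {M m t : ℕ} (htm : t ≤ m) (hmM : m ≤ M) (htM : t < M)
    {i : ℕ} (hi : i ≤ t) : (M.choose i : ℝ) * (((m : ℝ) - t) / (M - t)) ^ i ≤ m.choose i := by
  have hMt : (0 : ℝ) < M - t := by rw [sub_pos]; exact_mod_cast htM
  set γ := ((m : ℝ) - t) / (M - t)
  have hγ : 0 ≤ γ := div_nonneg (by rw [sub_nonneg]; exact_mod_cast htm) hMt.le
  induction i with
  | zero => simp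
  | succ i ih =>
    have hM : (M.choose (i + 1) : ℝ) * (i + 1) = M.choose i * (M - i) := by
      rw [← Nat.cast_sub (by omega)]; exact_mod_cast Nat.choose_succ_right_eq M i
    have hm : (m.choose (i + 1) : ℝ) * (i + 1) = m.choose i * (m - i) := by
      rw [← Nat.cast_sub (by omega)]; exact_mod_cast Nat.choose_succ_right_eq m i
    have hMi : (i : ℝ) ≤ M := by exact_mod_cast (by omega : i ≤ M)
    have hfactor : ((M : ℝ) - i) * γ ≤ m - i := by
      rw [mul_div_assoc', div_le_iff₀ hMt]
      have : (i : ℝ) * (M - m) ≤ t * (M - m) :=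
        mul_le_mul_of_nonneg_right (by exact_mod_cast (by omega : i ≤ t))
          (by rw [sub_nonneg]; exact_mod_cast hmM)
      nlinarith
    refine le_of_mul_le_mul_right ?_ (by positivity : (0 : ℝ) < i + 1)
    calc (M.choose (i + 1) : ℝ) * γ ^ (i + 1) * (i + 1)
        = (M.choose i * γ ^ i) * ((M - i) * γ) := by rw [mul_right_comm, hM]; ring
      _ ≤ m.choose i * (m - i) :=
          mul_le_mul (ih (by omega)) hfactor (mul_nonneg (by linarith) hγ) (by positivity)
      _ = _ := hm.symm

lemma choose_le_two_mul_choose {M m t : ℕ} (htm : t ≤ m) (hmM : m ≤ M)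
    (hgap : 2 * (M - m) * t + t ≤ M) {i : ℕ} (hi : i ≤ t) :
    (M.choose i : ℝ) ≤ 2 * m.choose i := by
  rcases hmM.eq_or_lt with rfl | hlt
  · have := Nat.cast_nonneg (α := ℝ) (m.choose i); linarith
  have hMt : (0 : ℝ) < M - t := by rw [sub_pos]; exact_mod_cast htm.trans_lt hlt
  set γ := ((m : ℝ) - t) / (M - t)
  have hγ : 0 ≤ γ := div_nonneg (by rw [sub_nonneg]; exact_mod_cast htm) hMt.le
  have hγ1 : γ ≤ 1 := by
    rw [div_le_one hMt]; linarith [(Nat.cast_le (α := ℝ)).2 hmM]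
  have hγt : 1 / 2 ≤ γ ^ t := by
    have hbern := one_add_mul_sub_le_pow (a := γ) (by linarith) t
    have hcast : 2 * ((M : ℝ) - m) * t + t ≤ M := by exact_mod_cast hgap
    have hstep : -(1 / 2) ≤ t * (γ - 1) := by
      rw [div_sub_one hMt.ne', show (m : ℝ) - t - (M - t) = m - M by ring, mul_div_assoc',
        le_div_iff₀ hMt]
      linarith
    linarith
  have := choose_mul_pow_le_choose htm hmM (htm.trans_lt hlt) hi
  have := mul_le_mul_of_nonneg_left (pow_le_pow_of_le_one hγ hγ1 hi)
    (Nat.cast_nonneg (M.choose i))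
  nlinarith [Nat.cast_nonneg (α := ℝ) (M.choose i)]

lemma binomWeight_div_le_downWeight_term {n k m i : ℕ} {p : ℝ} (hp0 : 0 ≤ p) (hp1 : p ≤ 1)
    (hkn : k + i ≤ n) (hchoose : ((n - k).choose i : ℝ) ≤ 2 * m.choose i) :
    binomWeight n p (k + i) / (2 * n.choose k) ≤
      ((k + i).choose k : ℝ)⁻¹ * p ^ (k + i) * (1 - p) ^ (n - (k + i)) * m.choose i := by
  have hnk : (0 : ℝ) < n.choose k := by exact_mod_cast Nat.choose_pos (by omega)
  have hki : (0 : ℝ) < (k + i).choose k := by exact_mod_cast Nat.choose_pos (by omega)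
  have hmul : (n.choose (k + i) : ℝ) * (k + i).choose k = n.choose k * (n - k).choose i := by
    have := Nat.choose_mul (n := n) (k := k + i) (s := k) (by omega)
    rw [Nat.add_sub_cancel_left] at this
    exact_mod_cast this
  have hμ : 0 ≤ p ^ (k + i) * (1 - p) ^ (n - (k + i)) := by
    have : 0 ≤ 1 - p := by linarith
    positivity
  rw [binomWeight, div_le_iff₀ (by positivity)]
  calc (n.choose (k + i) : ℝ) * p ^ (k + i) * (1 - p) ^ (n - (k + i))
      = ((k + i).choose k : ℝ)⁻¹ * (n.choose k * (n - k).choose i) *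
          (p ^ (k + i) * (1 - p) ^ (n - (k + i))) := by
        rw [← hmul]; field_simp
    _ ≤ ((k + i).choose k : ℝ)⁻¹ * (n.choose k * (2 * m.choose i)) *
          (p ^ (k + i) * (1 - p) ^ (n - (k + i))) := by gcongr
    _ = _ := by ring

lemma inv_five_mul_choose_le_downWeight {n k t m : ℕ} {p : ℝ} (hp0 : 0 < p) (hp : p ≤ 1 / 2)
    (hk : (k : ℝ) ≤ p * n) (hk' : p * n < k + 1) (htk : 2 * t + 1 ≤ k)
    (hCt : 4 / (p * (1 - p) ^ 2) * t ≤ n / 10) (ht : 3 * n ≤ t * t) (htm : t ≤ m)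
    (hm : m ≤ n - k) (hgap : 2 * ((n - k) - m) * t + t ≤ n - k) :
    1 / (5 * n.choose k) ≤ downWeight n p k m := by
  have hkn : k ≤ n := by exact_mod_cast (show (k : ℝ) ≤ n by nlinarith)
  have hnk : (0 : ℝ) < n.choose k := by exact_mod_cast Nat.choose_pos hkn
  have hterm : ∀ i ∈ range (m + 1),
      0 ≤ ((k + i).choose k : ℝ)⁻¹ * p ^ (k + i) * (1 - p) ^ (n - (k + i)) * m.choose i :=
    fun i _ => by have : 0 ≤ 1 - p := (by linarith); positivity
  calc 1 / (5 * n.choose k : ℝ) = 2 / 5 * (1 / (2 * n.choose k)) := by field_simp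
    _ ≤ (∑ i ∈ range (t + 1), binomWeight n p (k + i)) * (1 / (2 * n.choose k)) := by
        gcongr
        exact two_fifths_le_sum_binomWeight hp0 hp hk hk' htk (by omega) hCt ht
    _ ≤ ∑ i ∈ range (t + 1),
          ((k + i).choose k : ℝ)⁻¹ * p ^ (k + i) * (1 - p) ^ (n - (k + i)) * m.choose i := by
        rw [sum_mul]
        refine sum_le_sum fun i hi => ?_
        rw [mem_range] at hi
        rw [← div_eq_mul_one_div]
        exact binomWeight_div_le_downWeight_term hp0.le (by linarith) (by omega)
          (choose_le_two_mul_choose htm hm hgap (by omega))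
    _ ≤ downWeight n p k m :=
        sum_le_sum_of_subset_of_nonneg (range_subset_range.2 (by omega)) fun i hi _ => hterm i hi

open Filter

lemma eventually_le_floor_mul {p : ℝ} (hp0 : 0 < p) (j : ℕ) :
    ∀ᶠ n : ℕ in atTop, j ≤ ⌊p * n⌋₊ :=
  (tendsto_nat_floor_atTop.comp
    (tendsto_natCast_atTop_atTop.const_mul_atTop hp0)).eventually_ge_atTop j

lemma eventually_sqrt_add_one_le {ε : ℝ} (hε : 0 < ε) :
    ∀ᶠ n : ℕ in atTop, (Nat.sqrt (3 * n) + 1 : ℝ) ≤ ε * n := by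
  filter_upwards [tendsto_natCast_atTop_atTop.eventually_ge_atTop (max (12 / ε ^ 2) (2 / ε))]
    with n hn
  have h12 : 12 ≤ ε ^ 2 * n := by
    have := (div_le_iff₀' (by positivity)).1 ((le_max_left _ _).trans hn); linarith
  have h2 : 2 ≤ ε * n := by
    have := (div_le_iff₀' hε).1 ((le_max_right _ _).trans hn); linarith
  have hsq : (Nat.sqrt (3 * n) : ℝ) ^ 2 ≤ 3 * n := by exact_mod_cast Nat.sqrt_le' (3 * n)
  have hs : (Nat.sqrt (3 * n) : ℝ) ≤ ε * n / 2 :=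
    le_of_pow_le_pow_left₀ two_ne_zero (by positivity) (by nlinarith)
  linarith

lemma eventually_inv_five_mul_choose_le_downWeight {p : ℝ} (hp0 : 0 < p) (hp : p ≤ 1 / 2)
    (j : ℕ) :
    ∀ᶠ n : ℕ in atTop, ∀ m, n - ⌊p * n⌋₊ - j ≤ m → m ≤ n - ⌊p * n⌋₊ →
      1 / (5 * n.choose ⌊p * n⌋₊) ≤ downWeight n p ⌊p * n⌋₊ m := by
  set C := 4 / (p * (1 - p) ^ 2)
  have hC : 0 < C := by have : 0 < 1 - p := (by linarith); positivity
  set ε := min (p / 4) (min (1 / (10 * C)) (1 / (4 * (2 * j + 1))))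
  have hε : 0 < ε := lt_min (by positivity) (lt_min (by positivity) (by positivity))
  have hεp : ε ≤ p / 4 := min_le_left _ _
  have hεC : ε * (10 * C) ≤ 1 :=
    (le_div_iff₀ (by positivity)).1 ((min_le_right _ _).trans (min_le_left _ _))
  have hεj : ε * (4 * (2 * j + 1)) ≤ 1 :=
    (le_div_iff₀ (by positivity)).1 ((min_le_right _ _).trans (min_le_right _ _))
  filter_upwards [eventually_sqrt_add_one_le hε,
    tendsto_natCast_atTop_atTop.eventually_ge_atTop (max (4 / p) (4 * j))]
    with n ht hn m hm₁ hm₂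
  set k := ⌊p * n⌋₊
  set t := Nat.sqrt (3 * n) + 1
  have hk : (k : ℝ) ≤ p * n := Nat.floor_le (by positivity)
  have hk' : p * n < k + 1 := Nat.lt_floor_add_one _
  have hn4p : 4 ≤ p * n := by
    have := (div_le_iff₀' hp0).1 ((le_max_left _ _).trans hn); linarith
  have hn4j : 4 * (j : ℝ) ≤ n := (le_max_right _ _).trans hn
  have htk : 2 * t + 1 ≤ k := by
    have : (2 * t + 1 : ℝ) < k + 1 := by push_cast [t]; nlinarith
    have : 2 * t + 1 < k + 1 := by exact_mod_cast this
    omega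
  have hsmall : 2 * j * t + t + k + j ≤ n := by
    have : (2 * j * t + t + k + j : ℝ) ≤ n := by push_cast [t]; nlinarith
    exact_mod_cast this
  have hd : 2 * ((n - k) - m) * t ≤ 2 * j * t := Nat.mul_le_mul_right t (by omega)
  refine inv_five_mul_choose_le_downWeight hp0 hp hk hk' htk ?_ ?_ (by omega) hm₂ (by omega)
  · push_cast [t]; nlinarith
  · exact (Nat.lt_succ_sqrt (3 * n)).le

/-- The Down Lemma: for sufficiently large `n` (depending on `p` and `|J|`),
`V_w(f) ≤ 5 V_w(g)`. -/
theorem stmt_17 (p : ℝ) (hp0 : 0 < p) (hp : p < 1 / 2) (jcard : ℕ) :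
    ∃ N : ℕ, ∀ n : ℕ, N ≤ n →
      ∀ J : Finset (Fin n), J.card = jcard →
        ∀ w : Finset (Fin n), w ⊆ J →
          ∀ f : Finset (Fin n) → ℝ,
            (∀ s : Finset (Fin n), s.card = ⌊p * n⌋₊ → f s ∈ Set.Icc (0:ℝ) 1) →
            Vwf ⌊p * n⌋₊ J w f ≤ 5 * Vwg p J w (upFn ⌊p * n⌋₊ f) := by
  obtain ⟨N, hN⟩ := eventually_atTop.1 ((eventually_le_floor_mul hp0 jcard).and
    (eventually_inv_five_mul_choose_le_downWeight hp0 hp.le jcard))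
  refine ⟨N, fun n hn J hJ w hw f hf => ?_⟩
  obtain ⟨hjk, hweight⟩ := hN n hn
  set k := ⌊p * n⌋₊
  have hwk : w.card ≤ k := (card_le_card hw).trans (hJ ▸ hjk)
  have hf0 : ∀ s : Finset (Fin n), s.card = k → 0 ≤ f s := fun s hs => (hf s hs).1
  set m := n - J.card - (k - w.card)
  have hW := hweight m (by omega) (by have := card_le_card hw; omega)
  rw [Vwf_eq_sum J w f hwk]
  refine le_trans ?_ (mul_le_mul_of_nonneg_left
    (sum_mul_downWeight_le_Vwg hp0.le (by linarith) hw hwk hf0) (by norm_num))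
  rw [mul_sum]
  refine sum_le_sum fun y hy => ?_
  obtain ⟨hyS, hyc⟩ := mem_powersetCard.1 hy
  have hfy : 0 ≤ f (w ∪ y) := hf0 _ (by
    rw [card_union_of_disjoint (disjoint_of_subset_left hw (subset_sdiff.1 hyS).2.symm)]
    omega)
  calc f (w ∪ y) / n.choose k = 5 * (f (w ∪ y) * (1 / (5 * n.choose k))) := by ring
    _ ≤ 5 * (f (w ∪ y) * downWeight n p k m) := by gcongr
end
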